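/- arXiv:1208.0357 — 8 statements merged into one kernel-verified Lean document; each statement's English description precedes it below -/
import Mathlib

section
/- Let ρ : G(α,β) → SL(2,ℂ) be an irreducible representation of the two-bridge knot group with tr ρ(μ) = 2 or tr ρ(μ) = −2. Then tr ρ(λ) = −2. -/
open Matrix

noncomputable section

/-- `SL(2,ℂ)`. -/
abbrev SL2C := Matrix.SpecialLinearGroup (Fin 2) ℂ

/-- `ε_i = (−1)^⌊iβ/α⌋`. -/
def eps (α β : ℤ) (i : ℕ) : ℤ :=
  if Even (Int.fdiv ((i : ℤ) * β) α) then 1 else -1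

/-- The word `w = y^{ε_1} x^{ε_2} y^{ε_3} ⋯ y^{ε_{α−2}} x^{ε_{α−1}}`. -/
def wordG {G : Type*} [Group G] (α β : ℤ) (x y : G) : G :=
  ((List.range (α.toNat - 1)).map
    (fun j => (if (j + 1) % 2 = 1 then y else x) ^ eps α β (j + 1))).prod

/-- The reversed word `w* = x^{ε_1} y^{ε_2} ⋯ x^{ε_{α−2}} y^{ε_{α−1}}`. -/
def wordStarG {G : Type*} [Group G] (α β : ℤ) (x y : G) : G :=
  ((List.range (α.toNat - 1)).map
    (fun j => (if (j + 1) % 2 = 1 then x else y) ^ eps α β (j + 1))).prod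

/-- `n = −Σ_{i=1}^{α−1} ε_i`. -/
def nval (α β : ℤ) : ℤ := -∑ i ∈ Finset.Icc 1 (α.toNat - 1), eps α β i

/-- The single relation `x w (w y)⁻¹` of the two-bridge knot group. -/
def twoBridgeRel (α β : ℤ) : Set (FreeGroup Bool) :=
  { FreeGroup.of true * wordG α β (FreeGroup.of true) (FreeGroup.of false) *
      (wordG α β (FreeGroup.of true) (FreeGroup.of false) * FreeGroup.of false)⁻¹ }

/-- The two-bridge knot group `G(α,β) = ⟨x, y ∣ xw = wy⟩`. -/
abbrev KnotGroup (α β : ℤ) := PresentedGroup (twoBridgeRel α β)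

/-- The generator `x`. -/
def xgen (α β : ℤ) : KnotGroup α β := PresentedGroup.of true

/-- The generator `y`. -/
def ygen (α β : ℤ) : KnotGroup α β := PresentedGroup.of false

/-- The meridian `μ = x`. -/
def meridian (α β : ℤ) : KnotGroup α β := xgen α β

/-- The longitude `λ = x^{2n} w w*`. -/
def longitude (α β : ℤ) : KnotGroup α β :=
  xgen α β ^ (2 * nval α β) *
    wordG α β (xgen α β) (ygen α β) * wordStarG α β (xgen α β) (ygen α β)

/-- A representation is irreducible if no one-dimensional subspace of `ℂ²` is
invariant under all `ρ(g)`. -/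
def IsIrreducibleRep {G : Type*} [Group G] (ρ : G →* SL2C) : Prop :=
  ¬ ∃ v : Fin 2 → ℂ, v ≠ 0 ∧
      ∀ g : G, ∃ c : ℂ, (ρ g : Matrix (Fin 2) (Fin 2) ℂ) *ᵥ v = c • v

/-!
Write `tr ρ(x) = 2t` with `t = ±1`. Then `ρ(x)` and its conjugate `ρ(y)` both have `t` as an
eigenvalue, and irreducibility makes their eigenlines distinct. In a basis of eigenvectors,
`ρ(x) = !![t, p; 0, t]` and `ρ(y) = !![t, 0; q, t]` with `p ≠ 0` (otherwise the second basis vector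
is a common eigenvector). The relation `x w = w y` then forces `W = ρ(w)` to have `W₁₁ = 0`.
Reflection in the antidiagonal is an anti-automorphism of `SL(2, ℂ)` fixing `ρ(x)` and `ρ(y)`.
Since `ε_{α-i} = ε_i`, it sends `W` to `ρ(w*)`. Hence `ρ(λ)` is the unipotent matrix `ρ(x)^{2n}`
times `W · ρ(w*) = !![-1, *; 0, -1]` (as `det W = -W₀₁ W₁₀ = 1`), so its trace is `-2`.
-/

open MulOpposite
open scoped MatrixGroups

namespace Matrix.SpecialLinearGroup

section CommRing

variable {n R : Type*} [Fintype n] [DecidableEq n] [CommRing R]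

theorem trace_coe_conj (g h : SpecialLinearGroup n R) :
    trace ((g⁻¹ * h * g : SpecialLinearGroup n R) : Matrix n n R) = trace (h : Matrix n n R) := by
  rw [coe_mul, coe_mul, trace_mul_cycle, ← coe_mul, mul_inv_cancel, coe_one, Matrix.one_mul]

theorem conj_mulVec_eq_smul_iff (g h : SpecialLinearGroup n R) (u : n → R) (t : R) :
    ((g⁻¹ * h * g : SpecialLinearGroup n R) : Matrix n n R) *ᵥ u = t • u ↔
      (h : Matrix n n R) *ᵥ ((g : Matrix n n R) *ᵥ u) = t • ((g : Matrix n n R) *ᵥ u) := by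
  have hg : ∀ v, (g : Matrix n n R) *ᵥ ((g⁻¹ : SpecialLinearGroup n R) *ᵥ v) = v := fun v => by
    rw [mulVec_mulVec, ← coe_mul, mul_inv_cancel, coe_one, one_mulVec]
  rw [coe_mul, coe_mul, ← mulVec_mulVec, ← mulVec_mulVec]
  constructor
  · intro h
    rw [← hg (_ *ᵥ _), h, mulVec_smul]
  · intro h
    rw [h, mulVec_smul, mulVec_mulVec, ← coe_mul, inv_mul_cancel, coe_one, one_mulVec]

end CommRing

variable {R : Type*} [CommRing R]

theorem det_fin_two_coe (g : SL(2, R)) : g 0 0 * g 1 1 - g 0 1 * g 1 0 = 1 := by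
  rw [← det_fin_two, g.det_coe]

theorem coe_zpow_of_coe_eq_unipotent {h : SL(2, R)} {c : R}
    (hc : (h : Matrix (Fin 2) (Fin 2) R) = !![1, c; 0, 1]) (k : ℤ) :
    ((h ^ k : SL(2, R)) : Matrix (Fin 2) (Fin 2) R) = !![1, k * c; 0, 1] := by
  induction k using Int.induction_on with
  | zero => simp [one_fin_two]
  | succ k ih =>
    rw [_root_.zpow_add_one, coe_mul, ih, hc, mul_fin_two]
    push_cast; ring_nf
  | pred k ih =>
    rw [_root_.zpow_sub_one, coe_mul, ih, coe_inv, hc, adjugate_fin_two_of, mul_fin_two]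
    push_cast; ring_nf

/-- Reflection in the antidiagonal, `g ↦ J gᵀ J` with `J = !![0, 1; 1, 0]`. -/
def antiTranspose (g : SL(2, R)) : SL(2, R) :=
  ⟨!![g 1 1, g 0 1; g 1 0, g 0 0], by rw [det_fin_two_of]; linear_combination det_fin_two_coe g⟩

theorem coe_antiTranspose (g : SL(2, R)) :
    (antiTranspose g : Matrix (Fin 2) (Fin 2) R) = !![g 1 1, g 0 1; g 1 0, g 0 0] :=
  rfl

theorem antiTranspose_mul (g h : SL(2, R)) :
    antiTranspose (g * h) = antiTranspose h * antiTranspose g := by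
  ext i j
  simp only [coe_mul, coe_antiTranspose, mul_apply, Fin.sum_univ_two]
  fin_cases i <;> fin_cases j <;> simp <;> ring

theorem antiTranspose_of_diag_eq {g : SL(2, R)} (hg : g 0 0 = g 1 1) : antiTranspose g = g := by
  ext i j
  fin_cases i <;> fin_cases j <;> simp [coe_antiTranspose, hg]

def antiTransposeHom : SL(2, R) →* SL(2, R)ᵐᵒᵖ where
  toFun g := op (antiTranspose g)
  map_one' := by
    rw [antiTranspose_of_diag_eq rfl, op_one]
  map_mul' g h := by rw [antiTranspose_mul, op_mul]

theorem trace_unipotent_mul_mul_antiTranspose {g : SL(2, R)} (hg : g 1 1 = 0) (u : R) :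
    trace (!![1, u; 0, 1] * (g : Matrix (Fin 2) (Fin 2) R) *
      (antiTranspose g : Matrix (Fin 2) (Fin 2) R)) = -2 := by
  rw [eta_fin_two (g : Matrix (Fin 2) (Fin 2) R), coe_antiTranspose, hg, mul_fin_two, mul_fin_two,
    trace_fin_two_of]
  linear_combination (-2) * det_fin_two_coe g + 2 * g 0 0 * hg

section Field

variable {K : Type*} [Field K]

theorem exists_mulVec_eq_smul_of_trace_eq (g : SL(2, K)) {t : K} (ht : t ^ 2 = 1)
    (htr : trace (g : Matrix (Fin 2) (Fin 2) K) = 2 * t) :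
    ∃ v ≠ 0, (g : Matrix (Fin 2) (Fin 2) K) *ᵥ v = t • v := by
  have hdet : ((g : Matrix (Fin 2) (Fin 2) K) - t • 1).det = 0 := by
    rw [trace_fin_two] at htr
    rw [det_fin_two]
    simp only [sub_apply, smul_apply, one_apply_eq, one_apply_ne, ne_eq, zero_ne_one,
      one_ne_zero, not_false_eq_true, smul_eq_mul, mul_one, mul_zero, sub_zero]
    linear_combination det_fin_two_coe g - t * htr - ht
  obtain ⟨v, hv, hgv⟩ := exists_mulVec_eq_zero_iff.2 hdet
  refine ⟨v, hv, ?_⟩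
  rwa [sub_mulVec, smul_mulVec, one_mulVec, sub_eq_zero] at hgv

theorem exists_mulVec_single_of_linearIndependent {v w : Fin 2 → K}
    (hvw : LinearIndependent K ![v, w]) :
    ∃ g : SL(2, K), ∃ c : K, c ≠ 0 ∧ (g : Matrix (Fin 2) (Fin 2) K) *ᵥ Pi.single 0 1 = v ∧
      (g : Matrix (Fin 2) (Fin 2) K) *ᵥ Pi.single 1 1 = c • w := by
  have hd : v 0 * w 1 - v 1 * w 0 ≠ 0 := by
    have h : IsUnit (of ![v, w]) := linearIndependent_rows_iff_isUnit.1 hvw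
    rwa [isUnit_iff_isUnit_det, isUnit_iff_ne_zero, det_fin_two] at h
  set c := (v 0 * w 1 - v 1 * w 0)⁻¹
  refine ⟨⟨!![v 0, c * w 0; v 1, c * w 1], ?_⟩, c, inv_ne_zero hd, ?_, ?_⟩
  · rw [det_fin_two_of, ← inv_mul_cancel₀ hd]; ring
  all_goals ext i; fin_cases i <;> simp

end Field

end Matrix.SpecialLinearGroup

namespace Matrix

variable {R : Type*} [CommRing R]

theorem eq_of_mulVec_single_zero_of_trace {A : Matrix (Fin 2) (Fin 2) R} {t : R}
    (hA : A *ᵥ Pi.single 0 1 = t • Pi.single 0 1) (htr : trace A = 2 * t) :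
    A = !![t, A 0 1; 0, t] := by
  rw [mulVec_single_one] at hA
  have h00 : A 0 0 = t := by simpa using congrFun hA 0
  have h10 : A 1 0 = 0 := by simpa using congrFun hA 1
  have h11 : A 1 1 = t := by rw [trace_fin_two, h00] at htr; linear_combination htr
  conv_lhs => rw [eta_fin_two A]
  rw [h00, h10, h11]

theorem eq_of_mulVec_single_one_of_trace {A : Matrix (Fin 2) (Fin 2) R} {t : R}
    (hA : A *ᵥ Pi.single 1 1 = t • Pi.single 1 1) (htr : trace A = 2 * t) :
    A = !![t, 0; A 1 0, t] := by
  rw [mulVec_single_one] at hA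
  have h01 : A 0 1 = 0 := by simpa using congrFun hA 0
  have h11 : A 1 1 = t := by simpa using congrFun hA 1
  have h00 : A 0 0 = t := by rw [trace_fin_two, h11] at htr; linear_combination htr
  conv_lhs => rw [eta_fin_two A]
  rw [h00, h01, h11]

end Matrix

section LineStabilizer

variable {G : Type*} [Group G] {n K : Type*} [Fintype n] [DecidableEq n] [Field K]

def lineStabilizer (ρ : G →* SpecialLinearGroup n K) (v : n → K) : Subgroup G where
  carrier := {g | ∃ c : K, (ρ g : Matrix n n K) *ᵥ v = c • v}
  one_mem' := ⟨1, by simp⟩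
  mul_mem' := by
    rintro g h ⟨a, ha⟩ ⟨b, hb⟩
    refine ⟨a * b, ?_⟩
    rw [map_mul, Matrix.SpecialLinearGroup.coe_mul, ← mulVec_mulVec, hb, mulVec_smul, ha,
      smul_smul, mul_comm]
  inv_mem' := by
    rintro g ⟨c, hc⟩
    refine ⟨c⁻¹, ?_⟩
    have hv : v = c • (ρ g⁻¹ : Matrix n n K) *ᵥ v := by
      rw [← mulVec_smul, ← hc, mulVec_mulVec, ← Matrix.SpecialLinearGroup.coe_mul, ← map_mul,
        inv_mul_cancel, map_one, Matrix.SpecialLinearGroup.coe_one, one_mulVec]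
    rcases eq_or_ne c 0 with rfl | hc0
    · rw [zero_smul] at hv
      simp [hv]
    · conv_rhs => rw [hv, smul_smul, inv_mul_cancel₀ hc0, one_smul]

theorem IsIrreducibleRep.lineStabilizer_ne_top {ρ : G →* SL2C} (hρ : IsIrreducibleRep ρ)
    {v : Fin 2 → ℂ} (hv : v ≠ 0) : lineStabilizer ρ v ≠ ⊤ :=
  fun h => hρ ⟨v, hv, fun g => (h ▸ Subgroup.mem_top g : g ∈ lineStabilizer ρ v)⟩

end LineStabilizer

section Words

variable {α β : ℤ}

theorem eps_toNat_sub (hβodd : Odd β) (hcop : IsCoprime α β) {i : ℕ} (hi0 : 0 < i)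
    (hiα : i < α.toNat) : eps α β (α.toNat - i) = eps α β i := by
  have hα : 0 < α := by omega
  have hndvd : ¬ α ∣ i * β := fun h => by
    have := Int.le_of_dvd (by omega) (hcop.dvd_of_dvd_mul_right h)
    omega
  have hdiv : ((α.toNat - i : ℕ) : ℤ) * β / α = β - i * β / α - 1 := by
    have hαn : (α.toNat : ℤ) = α := Int.toNat_of_nonneg hα.le
    rw [show ((α.toNat - i : ℕ) : ℤ) * β = -(i * β) + β * α by push_cast [hiα.le, hαn]; ring]
    rw [Int.add_mul_ediv_right _ _ hα.ne', Int.neg_ediv, if_neg hndvd, Int.sign_eq_one_of_pos hα]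
    ring
  unfold eps
  rw [Int.fdiv_eq_ediv_of_nonneg _ hα.le, Int.fdiv_eq_ediv_of_nonneg _ hα.le, hdiv]
  congr 1
  simp [Int.odd_sub, hβodd]

theorem map_wordG {G H : Type*} [Group G] [Group H] (f : G →* H) (x y : G) :
    f (wordG α β x y) = wordG α β (f x) (f y) := by
  simp only [wordG, map_list_prod, List.map_map]
  congr 1
  apply List.map_congr_left
  intro j _
  simp only [Function.comp_apply, apply_ite f, map_zpow]

theorem map_wordStarG {G H : Type*} [Group G] [Group H] (f : G →* H) (x y : G) :
    f (wordStarG α β x y) = wordStarG α β (f x) (f y) := by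
  simp only [wordStarG, map_list_prod, List.map_map]
  congr 1
  apply List.map_congr_left
  intro j _
  simp only [Function.comp_apply, apply_ite f, map_zpow]

theorem unop_map_wordG {G H : Type*} [Group G] [Group H] (hαodd : Odd α) (hβodd : Odd β)
    (hcop : IsCoprime α β) (f : G →* Hᵐᵒᵖ) (x y : G) :
    (f (wordG α β x y)).unop = wordStarG α β (f x).unop (f y).unop := by
  simp only [wordG, wordStarG, unop_map_list_prod, List.map_map, ← List.map_reverse,
    List.range_eq_range', List.reverse_range']
  congr 1
  apply List.map_congr_left
  intro j hj
  rw [List.mem_range'_1] at hj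
  have hidx : 0 + (α.toNat - 1) - 1 - j + 1 = α.toNat - (j + 1) := by omega
  simp only [Function.comp_apply, map_zpow, unop_zpow, apply_ite f, apply_ite unop, hidx,
    eps_toNat_sub hβodd hcop (Nat.succ_pos j) (by omega)]
  have hpar : (α.toNat - (j + 1)) % 2 = 1 ↔ ¬(j + 1) % 2 = 1 := by
    obtain ⟨k, rfl⟩ := hαodd
    omega
  rw [Nat.succ_eq_add_one, if_congr hpar rfl rfl, ite_not]

end Words

section KnotGroup

open Matrix.SpecialLinearGroup

variable {α β : ℤ}

theorem xgen_mul_wordG (α β : ℤ) :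
    xgen α β * wordG α β (xgen α β) (ygen α β) = wordG α β (xgen α β) (ygen α β) * ygen α β := by
  have h := PresentedGroup.mk_eq_mk_of_mul_inv_mem (Set.mem_singleton _ : _ ∈ twoBridgeRel α β)
  rwa [map_mul, map_mul, map_wordG] at h

theorem trace_ygen_eq_trace_xgen (ρ : KnotGroup α β →* SL2C) :
    trace (ρ (ygen α β) : Matrix (Fin 2) (Fin 2) ℂ) =
      trace (ρ (xgen α β) : Matrix (Fin 2) (Fin 2) ℂ) := by
  have hy : ygen α β = (wordG α β (xgen α β) (ygen α β))⁻¹ * xgen α β *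
      wordG α β (xgen α β) (ygen α β) := by
    rw [mul_assoc, xgen_mul_wordG, inv_mul_cancel_left]
  rw [hy, map_mul, map_mul, map_inv, trace_coe_conj]

theorem not_isIrreducibleRep_of_mulVec_eq_smul {ρ : KnotGroup α β →* SL2C} {v : Fin 2 → ℂ}
    (hv : v ≠ 0) {a b : ℂ} (hx : (ρ (xgen α β) : Matrix (Fin 2) (Fin 2) ℂ) *ᵥ v = a • v)
    (hy : (ρ (ygen α β) : Matrix (Fin 2) (Fin 2) ℂ) *ᵥ v = b • v) : ¬IsIrreducibleRep ρ := by
  intro hρ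
  refine hρ.lineStabilizer_ne_top hv (eq_top_iff.2 ?_)
  rw [← PresentedGroup.closure_range_of, Subgroup.closure_le, Set.range_subset_iff]
  rintro (_ | _)
  exacts [⟨b, hy⟩, ⟨a, hx⟩]

theorem exists_conj_eq_normalForm {ρ : KnotGroup α β →* SL2C} (hρ : IsIrreducibleRep ρ) {t : ℂ}
    (ht : t ^ 2 = 1) (htr : trace (ρ (xgen α β) : Matrix (Fin 2) (Fin 2) ℂ) = 2 * t) :
    ∃ g : SL2C, ∃ p q : ℂ, p ≠ 0 ∧
      ((g⁻¹ * ρ (xgen α β) * g : SL2C) : Matrix (Fin 2) (Fin 2) ℂ) = !![t, p; 0, t] ∧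
      ((g⁻¹ * ρ (ygen α β) * g : SL2C) : Matrix (Fin 2) (Fin 2) ℂ) = !![t, 0; q, t] := by
  obtain ⟨v, hv, hxv⟩ := exists_mulVec_eq_smul_of_trace_eq _ ht htr
  obtain ⟨w, hw, hyw⟩ :=
    exists_mulVec_eq_smul_of_trace_eq _ ht ((trace_ygen_eq_trace_xgen ρ).trans htr)
  have hvw : LinearIndependent ℂ ![v, w] := by
    rw [LinearIndependent.pair_iff' hv]
    rintro a rfl
    have ha : a ≠ 0 := by rintro rfl; exact hw (zero_smul _ _)
    rw [mulVec_smul, smul_comm] at hyw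
    exact not_isIrreducibleRep_of_mulVec_eq_smul hv hxv (smul_right_injective _ ha hyw) hρ
  obtain ⟨g, c, hc, hg0, hg1⟩ := exists_mulVec_single_of_linearIndependent hvw
  have hx0 : ((g⁻¹ * ρ (xgen α β) * g : SL2C) : Matrix (Fin 2) (Fin 2) ℂ) *ᵥ Pi.single 0 1 =
      t • Pi.single 0 1 := by
    rw [conj_mulVec_eq_smul_iff, hg0, hxv]
  have hy1 : ((g⁻¹ * ρ (ygen α β) * g : SL2C) : Matrix (Fin 2) (Fin 2) ℂ) *ᵥ Pi.single 1 1 =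
      t • Pi.single 1 1 := by
    rw [conj_mulVec_eq_smul_iff, hg1, mulVec_smul, hyw, smul_comm]
  have hX := eq_of_mulVec_single_zero_of_trace hx0 (by rw [trace_coe_conj, htr])
  refine ⟨g, _, _, ?_, hX,
    eq_of_mulVec_single_one_of_trace hy1 (by rw [trace_coe_conj, trace_ygen_eq_trace_xgen, htr])⟩
  intro hp
  have hx1 : ((g⁻¹ * ρ (xgen α β) * g : SL2C) : Matrix (Fin 2) (Fin 2) ℂ) *ᵥ Pi.single 1 1 =
      t • Pi.single 1 1 := by
    rw [hX, hp]
    ext i; fin_cases i <;> simp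
  rw [conj_mulVec_eq_smul_iff, hg1] at hx1 hy1
  exact not_isIrreducibleRep_of_mulVec_eq_smul (smul_ne_zero hc hw) hx1 hy1 hρ

theorem trace_longitude_eq_neg_two_of_normalForm (hαodd : Odd α) (hβodd : Odd β)
    (hcop : IsCoprime α β)
    {σ : KnotGroup α β →* SL2C} {t p q : ℂ} (ht : t ^ 2 = 1) (hp : p ≠ 0)
    (hx : (σ (xgen α β) : Matrix (Fin 2) (Fin 2) ℂ) = !![t, p; 0, t])
    (hy : (σ (ygen α β) : Matrix (Fin 2) (Fin 2) ℂ) = !![t, 0; q, t]) :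
    trace (σ (longitude α β) : Matrix (Fin 2) (Fin 2) ℂ) = -2 := by
  set W := σ (wordG α β (xgen α β) (ygen α β))
  have hW11 : W 1 1 = 0 := by
    have h := congrArg (fun g : SL2C => (g : Matrix (Fin 2) (Fin 2) ℂ) 0 1)
      (congrArg σ (xgen_mul_wordG α β))
    -- the (0, 1) entry of `X W = W Y` reads `t W₀₁ + p W₁₁ = W₀₁ t`
    simp only [map_mul, Matrix.SpecialLinearGroup.coe_mul, hx, hy, mul_apply, Fin.sum_univ_two,
      of_apply, cons_val', cons_val_zero, cons_val_one, cons_val_fin_one] at h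
    exact (mul_eq_zero.1 (by linear_combination h)).resolve_left hp
  have hstar : σ (wordStarG α β (xgen α β) (ygen α β)) = antiTranspose W := by
    have hxfix : antiTranspose (σ (xgen α β)) = σ (xgen α β) :=
      antiTranspose_of_diag_eq (by simp [hx])
    have hyfix : antiTranspose (σ (ygen α β)) = σ (ygen α β) :=
      antiTranspose_of_diag_eq (by simp [hy])
    rw [map_wordStarG, ← hxfix, ← hyfix]
    exact (unop_map_wordG hαodd hβodd hcop (antiTransposeHom.comp σ) _ _).symm
  have hpow : (σ (xgen α β ^ (2 * nval α β)) : Matrix (Fin 2) (Fin 2) ℂ) =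
      !![1, nval α β * (2 * t * p); 0, 1] := by
    rw [_root_.zpow_mul, map_zpow]
    refine coe_zpow_of_coe_eq_unipotent (c := 2 * t * p) ?_ _
    rw [zpow_two, map_mul, Matrix.SpecialLinearGroup.coe_mul, hx, mul_fin_two]
    ring_nf
    rw [ht]
  rw [longitude, map_mul, map_mul, hstar, Matrix.SpecialLinearGroup.coe_mul,
    Matrix.SpecialLinearGroup.coe_mul, hpow]
  exact trace_unipotent_mul_mul_antiTranspose hW11 _

end KnotGroup

theorem trace_longitude_eq_neg_two_general (α β : ℤ) (hαodd : Odd α) (hβodd : Odd β)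
    (hcop : IsCoprime α β)
    (ρ : KnotGroup α β →* SL2C) (hirr : IsIrreducibleRep ρ)
    (htr : Matrix.trace ((ρ (meridian α β) : Matrix (Fin 2) (Fin 2) ℂ)) = 2 ∨
      Matrix.trace ((ρ (meridian α β) : Matrix (Fin 2) (Fin 2) ℂ)) = -2) :
    Matrix.trace ((ρ (longitude α β) : Matrix (Fin 2) (Fin 2) ℂ)) = -2 := by
  obtain ⟨t, ht, htrx⟩ : ∃ t : ℂ, t ^ 2 = 1 ∧
      trace (ρ (xgen α β) : Matrix (Fin 2) (Fin 2) ℂ) = 2 * t := by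
    rcases htr with h | h
    exacts [⟨1, by norm_num, by rw [← meridian, h]; norm_num⟩,
      ⟨-1, by norm_num, by rw [← meridian, h]; norm_num⟩]
  obtain ⟨g, p, q, hp, hx, hy⟩ := exists_conj_eq_normalForm hirr ht htrx
  let σ := (MulAut.conj g⁻¹).toMonoidHom.comp ρ
  have hσ : ∀ k, σ k = g⁻¹ * ρ k * g := fun k => by simp [σ]
  rw [← Matrix.SpecialLinearGroup.trace_coe_conj g, ← hσ]
  exact trace_longitude_eq_neg_two_of_normalForm hαodd hβodd hcop ht hp (by rw [hσ, hx])
    (by rw [hσ, hy])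

/-- If `ρ` is an irreducible representation of the two-bridge knot group with
`tr ρ(μ) = 2` or `tr ρ(μ) = −2`, then `tr ρ(λ) = −2`. -/
theorem trace_longitude_eq_neg_two (α β : ℤ) (hα1 : 1 < α) (hαodd : Odd α) (hβodd : Odd β)
    (hβl : -α < β) (hβu : β < α) (hcop : IsCoprime α β)
    (ρ : KnotGroup α β →* SL2C) (hirr : IsIrreducibleRep ρ)
    (htr : Matrix.trace ((ρ (meridian α β) : Matrix (Fin 2) (Fin 2) ℂ)) = 2 ∨
      Matrix.trace ((ρ (meridian α β) : Matrix (Fin 2) (Fin 2) ℂ)) = -2) :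
    Matrix.trace ((ρ (longitude α β) : Matrix (Fin 2) (Fin 2) ℂ)) = -2 :=
  trace_longitude_eq_neg_two_general α β hαodd hβodd hcop ρ hirr htr

end
end

section
/- Suppose μ₀ ∈ {1,−1}, t ∈ ℂ, and the matrices X, Y, W satisfy XW = WY. Then d = 0, c = t·b, and t·b² = −1; in particular t ≠ 0 and b ≠ 0. -/
open Matrix

noncomputable section

/-- `X = [[μ₀, 1], [0, μ₀]]`. -/
def Xmat (μ₀ : ℂ) : Matrix (Fin 2) (Fin 2) ℂ := !![μ₀, 1; 0, μ₀]

/-- `Y = [[μ₀, 0], [t, μ₀]]`. -/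
def Ymat (μ₀ t : ℂ) : Matrix (Fin 2) (Fin 2) ℂ := !![μ₀, 0; t, μ₀]

/-- `W = Y^{ε_1} X^{ε_2} Y^{ε_3} ⋯ Y^{ε_{α−2}} X^{ε_{α−1}}`. -/
def Wmat (α β : ℤ) (μ₀ t : ℂ) : Matrix (Fin 2) (Fin 2) ℂ :=
  ((List.range (α.toNat - 1)).map
    (fun j => (if (j + 1) % 2 = 1 then Ymat μ₀ t else Xmat μ₀) ^ eps α β (j + 1))).prod

lemma det_W (α β : ℤ) (μ₀ t : ℂ) (hμ : μ₀ = 1 ∨ μ₀ = -1) :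
    (Wmat α β μ₀ t).det = 1 := by
  have h : (Wmat α β μ₀ t).det
      = ((List.range (α.toNat - 1)).map
          (fun j => Matrix.det ((if (j + 1) % 2 = 1 then Ymat μ₀ t else Xmat μ₀)
            ^ eps α β (j + 1)))).prod := by
    rw [Wmat, ← Matrix.coe_detMonoidHom, MonoidHom.map_list_prod, List.map_map]
    rfl
  rw [h]
  apply List.prod_eq_one
  intro x hx
  simp only [List.mem_map] at hx
  obtain ⟨j, -, rfl⟩ := hx
  have hbase : (if (j + 1) % 2 = 1 then Ymat μ₀ t else Xmat μ₀).det = 1 := by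
    rcases hμ with h | h <;> split <;>
      simp [Xmat, Ymat, Matrix.det_fin_two_of, h]
  have heps : eps α β (j + 1) = 1 ∨ eps α β (j + 1) = -1 := by
    rw [eps]; split <;> simp
  rcases heps with h1 | h1
  · rw [h1, zpow_one, hbase]
  · rw [h1, Matrix.zpow_neg_one, Matrix.det_nonsing_inv, hbase]
    simp

/-- If `μ₀ ∈ {1,−1}`, `t ∈ ℂ`, and `XW = WY`, then (with `W = [[a,b],[c,d]]`)
`d = 0`, `c = t·b`, and `t·b² = −1`; in particular `t ≠ 0` and `b ≠ 0`. -/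
theorem entries_of_W (α β : ℤ) (hα1 : 1 < α) (hαodd : Odd α) (hβodd : Odd β)
    (hβl : -α < β) (hβu : β < α) (hcop : IsCoprime α β)
    (μ₀ t : ℂ) (hμ : μ₀ = 1 ∨ μ₀ = -1)
    (hrel : Xmat μ₀ * Wmat α β μ₀ t = Wmat α β μ₀ t * Ymat μ₀ t) :
    Wmat α β μ₀ t 1 1 = 0 ∧
    Wmat α β μ₀ t 1 0 = t * Wmat α β μ₀ t 0 1 ∧
    t * (Wmat α β μ₀ t 0 1) ^ 2 = -1 ∧
    t ≠ 0 ∧ Wmat α β μ₀ t 0 1 ≠ 0 := by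
  have hdet := det_W α β μ₀ t hμ
  set W := Wmat α β μ₀ t with hW
  rw [Matrix.det_fin_two] at hdet
  have h00 := congrFun (congrFun hrel 0) 0
  have h01 := congrFun (congrFun hrel 0) 1
  simp [Matrix.mul_apply, Fin.sum_univ_two, Xmat, Ymat] at h00 h01
  -- h01 : μ₀ * W 0 1 + 1 * W 1 1 = W 0 0 * 0 + W 0 1 * μ₀
  have hd : W 1 1 = 0 := by linear_combination h01
  have hc : W 1 0 = t * W 0 1 := by linear_combination h00
  have htb : t * (W 0 1) ^ 2 = -1 := by
    rw [hd, hc] at hdet; ring_nf at hdet ⊢; linear_combination -hdet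
  refine ⟨hd, hc, htb, ?_, ?_⟩
  · intro h; rw [h] at htb; simp at htb
  · intro h; rw [h] at htb; simp at htb
end
end

section
/- Let μ₀ ∈ {1,−1}, t ∈ ℂ, and let W* = X^{ε_1} Y^{ε_2} ⋯ X^{ε_{α−2}} Y^{ε_{α−1}} be the matrix of the reversed word and n = −Σ_{i=1}^{α−1} ε_i. Then W* = [[d, b],[c, a]] is the anti-transpose of W; moreover, if XW = WY, then W·W* = [[−1, 2ab],[0, −1]] and X^{2n}·W·W* = [[−1, 2ab − 2μ₀n],[0, −1]]. -/
open Matrix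

noncomputable section

/-- `W* = X^{ε_1} Y^{ε_2} ⋯ X^{ε_{α−2}} Y^{ε_{α−1}}`, the matrix of the reversed word. -/
def WstarMat (α β : ℤ) (μ₀ t : ℂ) : Matrix (Fin 2) (Fin 2) ℂ :=
  ((List.range (α.toNat - 1)).map
    (fun j => (if (j + 1) % 2 = 1 then Xmat μ₀ else Ymat μ₀ t) ^ eps α β (j + 1))).prod

/-! ### Auxiliary material -/

/-- The anti-transpose of a 2×2 matrix. -/
def atr (M : Matrix (Fin 2) (Fin 2) ℂ) : Matrix (Fin 2) (Fin 2) ℂ :=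
  !![M 1 1, M 0 1; M 1 0, M 0 0]

lemma atr_mul (A B : Matrix (Fin 2) (Fin 2) ℂ) : atr (A * B) = atr B * atr A := by
  ext i j
  fin_cases i <;> fin_cases j <;>
    simp [atr, Matrix.mul_apply, Fin.sum_univ_two] <;> ring

lemma atr_one : atr (1 : Matrix (Fin 2) (Fin 2) ℂ) = 1 := by
  ext i j
  fin_cases i <;> fin_cases j <;> simp [atr, Matrix.one_apply]

lemma atr_list_prod (l : List (Matrix (Fin 2) (Fin 2) ℂ)) :
    atr l.prod = (l.reverse.map atr).prod := by
  induction l with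
  | nil => simp [atr_one]
  | cons a l ih => simp [atr_mul, ih]

lemma atr_det (A : Matrix (Fin 2) (Fin 2) ℂ) : (atr A).det = A.det := by
  simp [atr, Matrix.det_fin_two]; ring

lemma atr_inv (A : Matrix (Fin 2) (Fin 2) ℂ) : atr A⁻¹ = (atr A)⁻¹ := by
  rw [Matrix.inv_def, Matrix.inv_def, atr_det, Matrix.adjugate_fin_two, Matrix.adjugate_fin_two]
  ext i j
  fin_cases i <;> fin_cases j <;> simp [atr, Matrix.smul_apply]

lemma unitri_pow (c : ℂ) : ∀ n : ℕ,
    (!![1, c; 0, 1] : Matrix (Fin 2) (Fin 2) ℂ) ^ n = !![1, (n : ℂ) * c; 0, 1]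
  | 0 => by ext i j; fin_cases i <;> fin_cases j <;> simp [Matrix.one_apply]
  | (n+1) => by
      rw [pow_succ, unitri_pow c n, Matrix.mul_fin_two]
      push_cast
      ext i j
      fin_cases i <;> fin_cases j <;> simp <;> ring

lemma unitri_inv (c : ℂ) :
    (!![1, c; 0, 1] : Matrix (Fin 2) (Fin 2) ℂ)⁻¹ = !![1, -c; 0, 1] := by
  apply Matrix.inv_eq_left_inv
  rw [Matrix.mul_fin_two]
  ext i j
  fin_cases i <;> fin_cases j <;> simp [Matrix.one_apply]

lemma unitri_zpow (c : ℂ) (n : ℤ) :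
    (!![1, c; 0, 1] : Matrix (Fin 2) (Fin 2) ℂ) ^ n = !![1, (n : ℂ) * c; 0, 1] := by
  cases n with
  | ofNat k => rw [Int.ofNat_eq_coe, zpow_natCast, unitri_pow]; push_cast; rfl
  | negSucc k =>
      rw [zpow_negSucc, unitri_pow, unitri_inv]
      congr 1
      push_cast [Int.cast_negSucc]
      ring

lemma eps_cases (α β : ℤ) (i : ℕ) : eps α β i = 1 ∨ eps α β i = -1 := by
  unfold eps; split <;> simp

/-- The symmetry `ε_{α−i} = ε_i`. -/
lemma eps_symm (α β : ℤ) (hα1 : 1 < α) (hβodd : Odd β) (hcop : IsCoprime α β)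
    (i : ℕ) (hi0 : 0 < i) (hiα : (i : ℤ) < α) :
    eps α β (α.toNat - i) = eps α β i := by
  have hα0 : (0 : ℤ) < α := by omega
  set q : ℤ := ((i : ℤ) * β) / α with hq
  set r : ℤ := ((i : ℤ) * β) % α with hr
  have heq : (i : ℤ) * β = α * q + r := (Int.mul_ediv_add_emod _ _).symm
  have hr0 : 0 ≤ r := Int.emod_nonneg _ (by omega)
  have hrα : r < α := Int.emod_lt_of_pos _ hα0
  have hrne : r ≠ 0 := by
    intro h
    have hdvd : α ∣ (i : ℤ) * β := Int.dvd_of_emod_eq_zero h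
    have : α ∣ (i : ℤ) := hcop.dvd_of_dvd_mul_right hdvd
    have := Int.le_of_dvd (by exact_mod_cast hi0) this
    omega
  have hcast : ((α.toNat - i : ℕ) : ℤ) = α - i := by omega
  have hkey : ((α - (i : ℤ)) * β) / α = β - q - 1 := by
    have h1 : (α - (i : ℤ)) * β = (α - r) + α * (β - q - 1) := by linear_combination -heq
    rw [h1, Int.add_mul_ediv_left _ _ (by omega : α ≠ 0),
      Int.ediv_eq_zero_of_lt (by omega) (by omega), zero_add]
  have hpar : Even (β - q - 1) ↔ Even q := by
    rcases hβodd with ⟨k, hk⟩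
    constructor
    · rintro ⟨m, hm⟩; exact ⟨k - m, by omega⟩
    · rintro ⟨m, hm⟩; exact ⟨k - m, by omega⟩
  unfold eps
  rw [hcast, Int.fdiv_eq_ediv_of_nonneg _ (by omega), Int.fdiv_eq_ediv_of_nonneg _ (by omega), hkey, ← hq]
  exact if_congr hpar rfl rfl

lemma atr_X (μ₀ : ℂ) : atr (Xmat μ₀) = Xmat μ₀ := by
  ext i j; fin_cases i <;> fin_cases j <;> simp [atr, Xmat]

lemma atr_Y (μ₀ t : ℂ) : atr (Ymat μ₀ t) = Ymat μ₀ t := by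
  ext i j; fin_cases i <;> fin_cases j <;> simp [atr, Ymat]

lemma atr_zpow_pm {A : Matrix (Fin 2) (Fin 2) ℂ} (hA : atr A = A) {e : ℤ}
    (he : e = 1 ∨ e = -1) : atr (A ^ e) = A ^ e := by
  rcases he with h | h <;> subst h
  · rwa [zpow_one]
  · rw [Matrix.zpow_neg_one, atr_inv, hA]

/-- `W*` is the anti-transpose of `W`. -/
lemma wstar_eq_atr (α β : ℤ) (hα1 : 1 < α) (hαodd : Odd α) (hβodd : Odd β)
    (hcop : IsCoprime α β) (μ₀ t : ℂ) :
    WstarMat α β μ₀ t = atr (Wmat α β μ₀ t) := by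
  set m := α.toNat - 1 with hm
  have hmeven : m % 2 = 0 := by rcases hαodd with ⟨k, hk⟩; omega
  unfold Wmat WstarMat
  rw [atr_list_prod]
  congr 1
  apply List.ext_getElem
  · simp
  · intro i h1 h2
    simp only [List.getElem_map, List.getElem_reverse, List.getElem_range, List.length_map,
      List.length_reverse, List.length_range] at h1 h2 ⊢
    have him : i < m := by simpa using h1
    have hidx : m - 1 - i + 1 = m - i := by omega
    rw [hidx]
    have hsym : eps α β (m - i) = eps α β (i + 1) := by
      have h1 : α.toNat - (i + 1) = m - i := by omega
      rw [← h1]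
      exact eps_symm α β hα1 hβodd hcop (i + 1) (by omega) (by omega)
    rw [hsym]
    rcases Nat.even_or_odd i with ⟨k, hk⟩ | ⟨k, hk⟩
    · have e1 : (i + 1) % 2 = 1 := by omega
      have e2 : (m - i) % 2 ≠ 1 := by omega
      rw [if_pos e1, if_neg e2]
      exact (atr_zpow_pm (atr_X μ₀) (eps_cases α β (i + 1))).symm
    · have e1 : (i + 1) % 2 ≠ 1 := by omega
      have e2 : (m - i) % 2 = 1 := by omega
      rw [if_neg e1, if_pos e2]
      exact (atr_zpow_pm (atr_Y μ₀ t) (eps_cases α β (i + 1))).symm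

lemma detW (α β : ℤ) (μ₀ t : ℂ) (hμ2 : μ₀ * μ₀ = 1) : (Wmat α β μ₀ t).det = 1 := by
  unfold Wmat
  rw [← Matrix.coe_detMonoidHom, MonoidHom.map_list_prod, List.map_map]
  apply List.prod_eq_one
  intro x hx
  simp only [List.mem_map, List.mem_range, Function.comp] at hx
  obtain ⟨j, _, rfl⟩ := hx
  have hdet : ∀ M : Matrix (Fin 2) (Fin 2) ℂ, M.det = 1 →
      Matrix.detMonoidHom (M ^ eps α β (j + 1)) = 1 := by
    intro M hM
    rcases eps_cases α β (j + 1) with h | h <;> rw [h]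
    · simp [Matrix.coe_detMonoidHom, zpow_one, hM]
    · rw [Matrix.zpow_neg_one]
      simp [Matrix.coe_detMonoidHom, Matrix.det_nonsing_inv, hM]
  split
  · exact hdet _ (by simp [Ymat, Matrix.det_fin_two, hμ2])
  · exact hdet _ (by simp [Xmat, Matrix.det_fin_two, hμ2])

/-- `W*` is the anti-transpose `[[d,b],[c,a]]` of `W = [[a,b],[c,d]]`; moreover, if
`XW = WY` then `W·W* = [[−1, 2ab],[0, −1]]` and
`X^{2n}·W·W* = [[−1, 2ab − 2μ₀n],[0, −1]]`. -/
theorem Wstar_antitranspose (α β : ℤ) (hα1 : 1 < α) (hαodd : Odd α) (hβodd : Odd β)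
    (hβl : -α < β) (hβu : β < α) (hcop : IsCoprime α β)
    (μ₀ t : ℂ) (hμ : μ₀ = 1 ∨ μ₀ = -1) :
    WstarMat α β μ₀ t =
      !![Wmat α β μ₀ t 1 1, Wmat α β μ₀ t 0 1;
         Wmat α β μ₀ t 1 0, Wmat α β μ₀ t 0 0] ∧
    (Xmat μ₀ * Wmat α β μ₀ t = Wmat α β μ₀ t * Ymat μ₀ t →
      Wmat α β μ₀ t * WstarMat α β μ₀ t =
        !![-1, 2 * Wmat α β μ₀ t 0 0 * Wmat α β μ₀ t 0 1; 0, -1] ∧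
      Xmat μ₀ ^ (2 * nval α β) * Wmat α β μ₀ t * WstarMat α β μ₀ t =
        !![-1, 2 * Wmat α β μ₀ t 0 0 * Wmat α β μ₀ t 0 1 - 2 * μ₀ * (nval α β : ℂ);
           0, -1]) := by
  have hstar : WstarMat α β μ₀ t = atr (Wmat α β μ₀ t) :=
    wstar_eq_atr α β hα1 hαodd hβodd hcop μ₀ t
  refine ⟨hstar, ?_⟩
  intro hXW
  have hμ2 : μ₀ * μ₀ = 1 := by rcases hμ with h | h <;> rw [h] <;> ring
  set W := Wmat α β μ₀ t with hWdef
  have hdet : W.det = 1 := detW α β μ₀ t hμ2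
  have hd : W 1 1 = 0 := by
    have h01 := congrFun (congrFun hXW 0) 1
    simp [Xmat, Ymat, Matrix.mul_apply, Fin.sum_univ_two, ← hWdef] at h01
    linear_combination h01
  have hbc : W 0 1 * W 1 0 = -1 := by
    rw [Matrix.det_fin_two, hd] at hdet
    linear_combination -hdet
  rw [hstar]
  have hWW : W * atr W = !![-1, 2 * W 0 0 * W 0 1; 0, -1] := by
    ext i j
    fin_cases i <;> fin_cases j <;>
      simp [atr, Matrix.mul_apply, Fin.sum_univ_two, hd] <;>
      first
      | linear_combination hbc
      | ring
  refine ⟨hWW, ?_⟩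
  have hdetX : IsUnit (Xmat μ₀).det := by
    rw [show (Xmat μ₀).det = 1 from by simp [Xmat, Matrix.det_fin_two, hμ2]]
    exact isUnit_one
  have hX2 : Xmat μ₀ ^ (2 * nval α β) = !![1, (nval α β : ℂ) * (2 * μ₀); 0, 1] := by
    rw [Matrix.zpow_mul _ hdetX 2 (nval α β),
      show ((2:ℤ)) = ((2:ℕ):ℤ) from rfl, zpow_natCast,
      show Xmat μ₀ ^ (2:ℕ) = !![1, 2*μ₀; 0, 1] from by
        rw [pow_two, Xmat, Matrix.mul_fin_two]
        ext i j
        fin_cases i <;> fin_cases j <;> simp [hμ2] <;> ring,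
      unitri_zpow]
  rw [mul_assoc, hWW, hX2]
  ext i j
  fin_cases i <;> fin_cases j <;>
    simp [Matrix.mul_apply, Fin.sum_univ_two] <;> ring

end
end

section
/- Regard t as an indeterminate and form the matrix W over the polynomial ring ℤ[t] (each X^{±1} and Y^{±1} has entries in ℤ[t]). Then the entries a = W₁₁ and b = W₁₂ are polynomials in t of degree (α−3)/2 with leading coefficient ±1, and the entries c = W₂₁ and d = W₂₂ are polynomials in t of degree (α−1)/2 with leading coefficient ±1. -/
open Matrix Polynomial

noncomputable section

/-- `X = [[μ₀, 1], [0, μ₀]]` as a matrix over `ℤ[t]`. -/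
def XmatP (μ₀ : ℤ) : Matrix (Fin 2) (Fin 2) (Polynomial ℤ) :=
  !![C μ₀, 1; 0, C μ₀]

/-- `Y = [[μ₀, 0], [t, μ₀]]` as a matrix over `ℤ[t]`, with `t` the indeterminate. -/
def YmatP (μ₀ : ℤ) : Matrix (Fin 2) (Fin 2) (Polynomial ℤ) :=
  !![C μ₀, 0; X, C μ₀]

/-- `W = Y^{ε_1} X^{ε_2} Y^{ε_3} ⋯ Y^{ε_{α−2}} X^{ε_{α−1}}` over `ℤ[t]`. -/
def WmatP (α β : ℤ) (μ₀ : ℤ) : Matrix (Fin 2) (Fin 2) (Polynomial ℤ) :=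
  ((List.range (α.toNat - 1)).map
    (fun j => (if (j + 1) % 2 = 1 then YmatP μ₀ else XmatP μ₀) ^ eps α β (j + 1))).prod

/-- A polynomial is "nice of level k" if it has degree `k` and leading coeff `±1`. -/
def Nice (p : Polynomial ℤ) (k : ℕ) : Prop :=
  p.natDegree = k ∧ (p.leadingCoeff = 1 ∨ p.leadingCoeff = -1)

lemma Nice.ne_zero {p : Polynomial ℤ} {k : ℕ} (h : Nice p k) : p ≠ 0 := by
  intro h0
  rcases h.2 with h2 | h2 <;> rw [h0] at h2 <;> simp at h2

lemma nice_one : Nice 1 0 := by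
  constructor
  · simp
  · left; simp

lemma nice_C {e : ℤ} (he : e = 1 ∨ e = -1) : Nice (C e) 0 := by
  refine ⟨natDegree_C e, ?_⟩
  rcases he with rfl | rfl <;> simp

lemma nice_CX {e : ℤ} (he : e = 1 ∨ e = -1) : Nice (C e * X) 1 := by
  have he0 : e ≠ 0 := by rcases he with rfl | rfl <;> norm_num
  refine ⟨natDegree_C_mul_X e he0, ?_⟩
  have : (C e * X : Polynomial ℤ).leadingCoeff = e := by
    rw [leadingCoeff, natDegree_C_mul_X e he0]
    simp [coeff_C_mul]
  rw [this]; exact he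

lemma nice_mul {p q : Polynomial ℤ} {k l : ℕ} (hp : Nice p k) (hq : Nice q l) :
    Nice (p * q) (k + l) := by
  refine ⟨?_, ?_⟩
  · rw [natDegree_mul hp.ne_zero hq.ne_zero, hp.1, hq.1]
  · rw [leadingCoeff_mul]
    rcases hp.2 with h1 | h1 <;> rcases hq.2 with h2 | h2 <;> rw [h1, h2] <;> norm_num

lemma nice_add {p q : Polynomial ℤ} {k l : ℕ} (hp : Nice p k) (hq : Nice q l)
    (hkl : k < l) : Nice (p + q) l := by
  have hd : p.natDegree < q.natDegree := by rw [hp.1, hq.1]; exact hkl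
  refine ⟨?_, ?_⟩
  · rw [natDegree_add_eq_right_of_natDegree_lt hd, hq.1]
  · rw [leadingCoeff_add_of_degree_lt (degree_lt_degree hd)]
    exact hq.2

lemma nice_CX_add_one {e : ℤ} (he : e = 1 ∨ e = -1) : Nice (C e * X + 1) 1 := by
  rw [add_comm]
  exact nice_add nice_one (nice_CX he) Nat.zero_lt_one

lemma Xpow (μ e : ℤ) (hμ : μ = 1 ∨ μ = -1) (he : e = 1 ∨ e = -1) :
    XmatP μ ^ e = !![C μ, C e; 0, C μ] := by
  rcases he with rfl | rfl
  · rw [zpow_one]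
    simp [XmatP]
  · rw [Matrix.zpow_neg_one]
    apply Matrix.inv_eq_right_inv
    ext i j
    fin_cases i <;> fin_cases j <;> rcases hμ with rfl | rfl <;>
      simp [XmatP, Matrix.mul_apply, Fin.sum_univ_two, Matrix.one_apply] <;> ring

lemma Ypow (μ e : ℤ) (hμ : μ = 1 ∨ μ = -1) (he : e = 1 ∨ e = -1) :
    YmatP μ ^ e = !![C μ, 0; C e * X, C μ] := by
  rcases he with rfl | rfl
  · rw [zpow_one]
    simp [YmatP]
  · rw [Matrix.zpow_neg_one]
    apply Matrix.inv_eq_right_inv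
    ext i j
    fin_cases i <;> fin_cases j <;> rcases hμ with rfl | rfl <;>
      simp [YmatP, Matrix.mul_apply, Fin.sum_univ_two, Matrix.one_apply] <;> ring

/-- The product of a pair `Y^s * X^r`. -/
lemma pair_eq (μ s r : ℤ) (hμ : μ = 1 ∨ μ = -1) (hs : s = 1 ∨ s = -1)
    (hr : r = 1 ∨ r = -1) :
    YmatP μ ^ s * XmatP μ ^ r = !![1, C (r * μ); C (s * μ) * X, C (s * r) * X + 1] := by
  rw [Ypow μ s hμ hs, Xpow μ r hμ hr]
  refine Matrix.ext fun i j => ?_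
  fin_cases i <;> fin_cases j <;> rcases hμ with rfl | rfl <;>
    simp [Matrix.mul_apply, Fin.sum_univ_two, C_mul] <;> ring

lemma step (μ s r : ℤ) (hμ : μ = 1 ∨ μ = -1) (hs : s = 1 ∨ s = -1) (hr : r = 1 ∨ r = -1)
    (P : Matrix (Fin 2) (Fin 2) (Polynomial ℤ)) (k : ℕ)
    (h00 : Nice (P 0 0) k) (h01 : Nice (P 0 1) k)
    (h10 : Nice (P 1 0) (k+1)) (h11 : Nice (P 1 1) (k+1)) :
    Nice ((P * (YmatP μ ^ s * XmatP μ ^ r)) 0 0) (k+1) ∧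
    Nice ((P * (YmatP μ ^ s * XmatP μ ^ r)) 0 1) (k+1) ∧
    Nice ((P * (YmatP μ ^ s * XmatP μ ^ r)) 1 0) (k+2) ∧
    Nice ((P * (YmatP μ ^ s * XmatP μ ^ r)) 1 1) (k+2) := by
  have hsμ : s * μ = 1 ∨ s * μ = -1 := by rcases hs with rfl | rfl <;> rcases hμ with rfl | rfl <;> norm_num
  have hrμ : r * μ = 1 ∨ r * μ = -1 := by rcases hr with rfl | rfl <;> rcases hμ with rfl | rfl <;> norm_num
  have hsr : s * r = 1 ∨ s * r = -1 := by rcases hs with rfl | rfl <;> rcases hr with rfl | rfl <;> norm_num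
  rw [pair_eq μ s r hμ hs hr]
  have e00 : (P * !![1, C (r * μ); C (s * μ) * X, C (s * r) * X + 1]) 0 0
      = P 0 0 * 1 + P 0 1 * (C (s * μ) * X) := by
    simp [Matrix.mul_apply, Fin.sum_univ_two]
  have e01 : (P * !![1, C (r * μ); C (s * μ) * X, C (s * r) * X + 1]) 0 1
      = P 0 0 * C (r * μ) + P 0 1 * (C (s * r) * X + 1) := by
    simp [Matrix.mul_apply, Fin.sum_univ_two]
  have e10 : (P * !![1, C (r * μ); C (s * μ) * X, C (s * r) * X + 1]) 1 0
      = P 1 0 * 1 + P 1 1 * (C (s * μ) * X) := by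
    simp [Matrix.mul_apply, Fin.sum_univ_two]
  have e11 : (P * !![1, C (r * μ); C (s * μ) * X, C (s * r) * X + 1]) 1 1
      = P 1 0 * C (r * μ) + P 1 1 * (C (s * r) * X + 1) := by
    simp [Matrix.mul_apply, Fin.sum_univ_two]
  refine ⟨?_, ?_, ?_, ?_⟩
  · rw [e00]
    exact nice_add (by simpa using nice_mul h00 nice_one)
      (by simpa using nice_mul h01 (nice_CX hsμ)) (by omega)
  · rw [e01]
    exact nice_add (by simpa using nice_mul h00 (nice_C hrμ))
      (by simpa using nice_mul h01 (nice_CX_add_one hsr)) (by omega)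
  · rw [e10]
    exact nice_add (by simpa using nice_mul h10 nice_one)
      (by simpa using nice_mul h11 (nice_CX hsμ)) (by omega)
  · rw [e11]
    exact nice_add (by simpa using nice_mul h10 (nice_C hrμ))
      (by simpa using nice_mul h11 (nice_CX_add_one hsr)) (by omega)

/-- The key induction. -/
lemma key (μ : ℤ) (hμ : μ = 1 ∨ μ = -1) (s : ℕ → ℤ) (hs : ∀ j, s j = 1 ∨ s j = -1) :
    ∀ n : ℕ, 1 ≤ n →
    (Nice ((((List.range (2*n)).map
        (fun j => (if (j + 1) % 2 = 1 then YmatP μ else XmatP μ) ^ s (j + 1))).prod) 0 0) (n-1) ∧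
     Nice ((((List.range (2*n)).map
        (fun j => (if (j + 1) % 2 = 1 then YmatP μ else XmatP μ) ^ s (j + 1))).prod) 0 1) (n-1) ∧
     Nice ((((List.range (2*n)).map
        (fun j => (if (j + 1) % 2 = 1 then YmatP μ else XmatP μ) ^ s (j + 1))).prod) 1 0) n ∧
     Nice ((((List.range (2*n)).map
        (fun j => (if (j + 1) % 2 = 1 then YmatP μ else XmatP μ) ^ s (j + 1))).prod) 1 1) n) := by
  intro n hn
  induction n, hn using Nat.le_induction with
  | base =>
    have hlist : List.range (2*1) = [0, 1] := by decide
    rw [hlist]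
    simp only [List.map_cons, List.map_nil, List.prod_cons, List.prod_nil, mul_one,
      Nat.reduceAdd, Nat.reduceMod, reduceIte]
    rw [if_neg (by norm_num : ¬(0 = 1)), pair_eq μ (s 1) (s 2) hμ (hs 1) (hs 2)]
    have hsμ : s 1 * μ = 1 ∨ s 1 * μ = -1 := by
      rcases hs 1 with h | h <;> rcases hμ with rfl | rfl <;> rw [h] <;> norm_num
    have hrμ : s 2 * μ = 1 ∨ s 2 * μ = -1 := by
      rcases hs 2 with h | h <;> rcases hμ with rfl | rfl <;> rw [h] <;> norm_num
    have hsr : s 1 * s 2 = 1 ∨ s 1 * s 2 = -1 := by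
      rcases hs 1 with h | h <;> rcases hs 2 with h2 | h2 <;> rw [h, h2] <;> norm_num
    refine ⟨?_, ?_, ?_, ?_⟩ <;> simp only [Matrix.cons_val_zero, Matrix.cons_val_one,
      Matrix.head_cons, Matrix.head_fin_const, Matrix.of_apply]
    · exact nice_one
    · exact nice_C hrμ
    · exact nice_CX hsμ
    · exact nice_CX_add_one hsr
  | succ n hn ih =>
    have hrange : List.range (2*(n+1)) = List.range (2*n) ++ [2*n, 2*n+1] := by
      have h1 : 2*(n+1) = (2*n+1)+1 := by ring
      rw [h1, List.range_succ, List.range_succ]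
      simp
    rw [hrange, List.map_append, List.prod_append]
    simp only [List.map_cons, List.map_nil, List.prod_cons, List.prod_nil, mul_one]
    have h0 : (if (2*n + 1) % 2 = 1 then YmatP μ else XmatP μ) = YmatP μ := by
      rw [if_pos (by omega)]
    have h1 : (if (2*n + 1 + 1) % 2 = 1 then YmatP μ else XmatP μ) = XmatP μ := by
      rw [if_neg (by omega)]
    rw [h0, h1, ← mul_assoc]
    rw [mul_assoc _ (YmatP μ ^ s (2*n+1)) _]
    obtain ⟨i00, i01, i10, i11⟩ := ih
    have := step μ (s (2*n+1)) (s (2*n+1+1)) hμ (hs _) (hs _) _ (n-1) i00 i01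
      (by rwa [Nat.sub_add_cancel hn]) (by rwa [Nat.sub_add_cancel hn])
    have hc1 : n - 1 + 1 = (n+1) - 1 := by omega
    have hc2 : n - 1 + 2 = n + 1 := by omega
    rw [hc1, hc2] at this
    exact this

/-- Over `ℤ[t]`, the entries `a = W₁₁` and `b = W₁₂` of `W` are polynomials of degree
`(α−3)/2` with leading coefficient `±1`, and `c = W₂₁`, `d = W₂₂` are polynomials of
degree `(α−1)/2` with leading coefficient `±1`. -/
theorem WmatP_degrees (α β : ℤ) (hα1 : 1 < α) (hαodd : Odd α) (hβodd : Odd β)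
    (hβl : -α < β) (hβu : β < α) (hcop : IsCoprime α β)
    (μ₀ : ℤ) (hμ : μ₀ = 1 ∨ μ₀ = -1) :
    ((WmatP α β μ₀ 0 0).natDegree = (α.toNat - 3) / 2 ∧
      ((WmatP α β μ₀ 0 0).leadingCoeff = 1 ∨ (WmatP α β μ₀ 0 0).leadingCoeff = -1)) ∧
    ((WmatP α β μ₀ 0 1).natDegree = (α.toNat - 3) / 2 ∧
      ((WmatP α β μ₀ 0 1).leadingCoeff = 1 ∨ (WmatP α β μ₀ 0 1).leadingCoeff = -1)) ∧
    ((WmatP α β μ₀ 1 0).natDegree = (α.toNat - 1) / 2 ∧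
      ((WmatP α β μ₀ 1 0).leadingCoeff = 1 ∨ (WmatP α β μ₀ 1 0).leadingCoeff = -1)) ∧
    ((WmatP α β μ₀ 1 1).natDegree = (α.toNat - 1) / 2 ∧
      ((WmatP α β μ₀ 1 1).leadingCoeff = 1 ∨ (WmatP α β μ₀ 1 1).leadingCoeff = -1)) := by
  have hseps : ∀ j : ℕ, eps α β j = 1 ∨ eps α β j = -1 := by
    intro j
    unfold eps
    split <;> simp
  obtain ⟨m, hm⟩ := hαodd
  have hm1 : 1 ≤ m := by omega
  have htoNat : α.toNat = 2 * m.toNat + 1 := by omega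
  set n : ℕ := m.toNat with hn
  have hn1 : 1 ≤ n := by omega
  have h2n : α.toNat - 1 = 2 * n := by omega
  have h31 : (α.toNat - 3) / 2 = n - 1 := by omega
  have h11 : (α.toNat - 1) / 2 = n := by omega
  have := key μ₀ hμ (eps α β) hseps n hn1
  rw [WmatP, h31, h11, h2n]
  exact ⟨⟨this.1.1, this.1.2⟩, ⟨this.2.1.1, this.2.1.2⟩,
    ⟨this.2.2.1.1, this.2.2.1.2⟩, ⟨this.2.2.2.1, this.2.2.2.2⟩⟩

end
end

section
/- Suppose μ₀ ∈ {1,−1}, t ∈ ℂ, and the matrices X, Y, W satisfy XW = WY. Then t is an algebraic integer, i.e., t is a root of a monic polynomial with integer coefficients. -/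
open Matrix

noncomputable section

open Polynomial

namespace TAux

/-- polynomial version of `Y^e` for `e = ±1`. -/
def Yp (μ e : ℤ) : Matrix (Fin 2) (Fin 2) ℤ[X] := !![C μ, 0; C e * X, C μ]

/-- polynomial version of `X^e` for `e = ±1`. -/
def Xp (μ e : ℤ) : Matrix (Fin 2) (Fin 2) ℤ[X] := !![C μ, C e; 0, C μ]

/-- polynomial version of `W`. -/
def Wp (μ : ℤ) (s : ℕ → ℤ) (n : ℕ) : Matrix (Fin 2) (Fin 2) ℤ[X] :=
  ((List.range n).map
    (fun j => if (j + 1) % 2 = 1 then Yp μ (s (j + 1)) else Xp μ (s (j + 1)))).prod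

lemma eps_mem (α β : ℤ) (i : ℕ) : eps α β i = 1 ∨ eps α β i = -1 := by
  unfold eps; split <;> simp

lemma Wp_succ2 (μ : ℤ) (s : ℕ → ℤ) (n : ℕ) (hn : n % 2 = 0) :
    Wp μ s (n + 2) = Wp μ s n * (Yp μ (s (n + 1)) * Xp μ (s (n + 2))) := by
  have h1 : (n + 1) % 2 = 1 := by omega
  have h2 : ¬ ((n + 1 + 1) % 2 = 1) := by omega
  unfold Wp
  rw [show n + 2 = (n + 1) + 1 from rfl, List.range_succ, List.range_succ]
  simp only [List.map_append, List.map_cons, List.map_nil, List.prod_append,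
    List.prod_cons, List.prod_nil, mul_one]
  rw [if_pos h1, if_neg h2, mul_assoc]

lemma mul_ent (A B : Matrix (Fin 2) (Fin 2) ℤ[X]) (i j : Fin 2) :
    (A * B) i j = A i 0 * B 0 j + A i 1 * B 1 j := by
  simp [Matrix.mul_apply, Fin.sum_univ_two]

lemma pair00 (μ e e' : ℤ) (hμ : μ = 1 ∨ μ = -1) : (Yp μ e * Xp μ e') 0 0 = 1 := by
  rcases hμ with h | h <;> subst h <;> rw [mul_ent] <;> simp [Yp, Xp] <;>
    all_goals (push_cast; ring)

lemma pair01 (μ e e' : ℤ) : (Yp μ e * Xp μ e') 0 1 = C (μ * e') := by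
  rw [mul_ent]
  simp [Yp, Xp]
  all_goals (push_cast; try ring)

lemma pair10 (μ e e' : ℤ) : (Yp μ e * Xp μ e') 1 0 = C (e * μ) * X := by
  rw [mul_ent]
  simp [Yp, Xp]
  all_goals (push_cast; try ring)

lemma pair11 (μ e e' : ℤ) (hμ : μ = 1 ∨ μ = -1) :
    (Yp μ e * Xp μ e') 1 1 = C (e * e') * X + 1 := by
  rcases hμ with h | h <;> subst h <;> rw [mul_ent] <;> simp [Yp, Xp] <;>
    all_goals (push_cast; ring)

lemma Wp_two (μ : ℤ) (s : ℕ → ℤ) :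
    Wp μ s 2 = Yp μ (s 1) * Xp μ (s 2) := by
  have h := Wp_succ2 μ s 0 rfl
  have h0 : Wp μ s 0 = 1 := by simp [Wp]
  rw [h0, one_mul] at h
  exact h

lemma deg_CX (a : ℤ) : (C a * X : ℤ[X]).degree ≤ 1 := by
  calc (C a * X : ℤ[X]).degree ≤ (C a : ℤ[X]).degree + (X : ℤ[X]).degree := degree_mul_le _ _
    _ ≤ 0 + 1 := add_le_add degree_C_le degree_X_le
    _ = 1 := by norm_num

lemma Wp_deg (μ : ℤ) (hμ : μ = 1 ∨ μ = -1) (s : ℕ → ℤ) (hs : ∀ i, s i = 1 ∨ s i = -1) :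
    ∀ k : ℕ,
      (Wp μ s (2 * (k + 1)) 0 0).degree ≤ ((k : ℕ) : WithBot ℕ) ∧
      (Wp μ s (2 * (k + 1)) 0 1).degree ≤ ((k : ℕ) : WithBot ℕ) ∧
      ((Wp μ s (2 * (k + 1)) 0 1).coeff k = 1 ∨ (Wp μ s (2 * (k + 1)) 0 1).coeff k = -1) ∧
      (Wp μ s (2 * (k + 1)) 1 0).degree ≤ ((k + 1 : ℕ) : WithBot ℕ) ∧
      (Wp μ s (2 * (k + 1)) 1 1).degree ≤ ((k + 1 : ℕ) : WithBot ℕ) := by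
  intro k
  induction k with
  | zero =>
    rw [show 2 * (0 + 1) = 2 from rfl, Wp_two]
    refine ⟨?_, ?_, ?_, ?_, ?_⟩
    · rw [pair00 μ _ _ hμ]
      exact le_trans degree_one_le (by norm_num)
    · rw [pair01]
      exact le_trans degree_C_le (by norm_num)
    · rw [pair01, coeff_C_zero]
      rcases hμ with h | h <;> rcases hs 2 with h2 | h2 <;> simp [h, h2]
    · rw [pair10]
      exact le_trans (deg_CX _) (by norm_num)
    · rw [pair11 μ _ _ hμ]
      refine le_trans (degree_add_le _ _) (max_le ?_ ?_)
      · exact le_trans (deg_CX _) (by norm_num)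
      · exact le_trans degree_one_le (by norm_num)
  | succ k ih =>
    obtain ⟨h00, h01, hc, h10, h11⟩ := ih
    have hrw : Wp μ s (2 * (k + 1 + 1)) =
        Wp μ s (2 * (k + 1)) * (Yp μ (s (2 * (k + 1) + 1)) * Xp μ (s (2 * (k + 1) + 2))) := by
      rw [show 2 * (k + 1 + 1) = 2 * (k + 1) + 2 by ring]
      exact Wp_succ2 μ s _ (by omega)
    set Q := Wp μ s (2 * (k + 1)) with hQ
    set e := s (2 * (k + 1) + 1) with he
    set e' := s (2 * (k + 1) + 2) with he'
    have hse : e = 1 ∨ e = -1 := by rw [he]; exact hs _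
    have hse' : e' = 1 ∨ e' = -1 := by rw [he']; exact hs _
    have hent0 : ∀ i, Wp μ s (2 * (k + 1 + 1)) i 0 = Q i 0 * 1 + Q i 1 * (C (e * μ) * X) := by
      intro i
      rw [hrw, mul_ent, pair00 μ _ _ hμ, pair10]
    have hent1 : ∀ i, Wp μ s (2 * (k + 1 + 1)) i 1
        = Q i 0 * C (μ * e') + Q i 1 * (C (e * e') * X + 1) := by
      intro i
      rw [hrw, mul_ent, pair01, pair11 μ _ _ hμ]
    have hkk : ((k : ℕ) : WithBot ℕ) + 1 = ((k + 1 : ℕ) : WithBot ℕ) := by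
      push_cast; ring
    have hmono : ((k : ℕ) : WithBot ℕ) ≤ ((k + 1 : ℕ) : WithBot ℕ) := by
      exact_mod_cast Nat.le_succ k
    have hmono2 : ((k + 1 : ℕ) : WithBot ℕ) ≤ ((k + 2 : ℕ) : WithBot ℕ) := by
      exact_mod_cast Nat.le_succ (k + 1)
    have degQ01X : ∀ a : ℤ, (Q 0 1 * (C a * X)).degree ≤ ((k + 1 : ℕ) : WithBot ℕ) := by
      intro a
      calc (Q 0 1 * (C a * X)).degree ≤ (Q 0 1).degree + (C a * X).degree := degree_mul_le _ _
        _ ≤ ((k : ℕ) : WithBot ℕ) + 1 := add_le_add h01 (deg_CX a)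
        _ = ((k + 1 : ℕ) : WithBot ℕ) := hkk
    have degQ11X : ∀ a : ℤ, (Q 1 1 * (C a * X)).degree ≤ ((k + 2 : ℕ) : WithBot ℕ) := by
      intro a
      calc (Q 1 1 * (C a * X)).degree ≤ (Q 1 1).degree + (C a * X).degree := degree_mul_le _ _
        _ ≤ ((k + 1 : ℕ) : WithBot ℕ) + 1 := add_le_add h11 (deg_CX a)
        _ = ((k + 2 : ℕ) : WithBot ℕ) := by push_cast; ring
    refine ⟨?_, ?_, ?_, ?_, ?_⟩
    · rw [hent0 0]
      refine le_trans (degree_add_le _ _) (max_le ?_ ?_)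
      · rw [mul_one]; exact h00.trans hmono
      · exact degQ01X (e * μ)
    · rw [hent1 0]
      refine le_trans (degree_add_le _ _) (max_le ?_ ?_)
      · calc (Q 0 0 * C (μ * e')).degree ≤ (Q 0 0).degree + (C (μ * e') : ℤ[X]).degree :=
              degree_mul_le _ _
          _ ≤ ((k : ℕ) : WithBot ℕ) + 0 := add_le_add h00 degree_C_le
          _ ≤ ((k + 1 : ℕ) : WithBot ℕ) := by rw [add_zero]; exact hmono
      · rw [mul_add]
        refine le_trans (degree_add_le _ _) (max_le (degQ01X (e * e')) ?_)
        rw [mul_one]; exact h01.trans hmono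
    · rw [hent1 0]
      have hz1 : (Q 0 0 * C (μ * e')).coeff (k + 1) = 0 := by
        rw [coeff_mul_C]
        have : (Q 0 0).coeff (k + 1) = 0 :=
          coeff_eq_zero_of_degree_lt (lt_of_le_of_lt h00 (by exact_mod_cast Nat.lt_succ_self k))
        rw [this, zero_mul]
      have hz2 : (Q 0 1).coeff (k + 1) = 0 :=
        coeff_eq_zero_of_degree_lt (lt_of_le_of_lt h01 (by exact_mod_cast Nat.lt_succ_self k))
      have hx : (Q 0 1 * (C (e * e') * X)).coeff (k + 1) = (Q 0 1).coeff k * (e * e') := by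
        rw [show Q 0 1 * (C (e * e') * X) = (Q 0 1 * C (e * e')) * X by ring,
          coeff_mul_X, coeff_mul_C]
      rw [mul_add, coeff_add, coeff_add, hz1, hx, mul_one, hz2, zero_add, add_zero]
      rcases hc with h | h <;> rcases hse with h1 | h1 <;> rcases hse' with h2 | h2 <;>
        rw [h, h1, h2] <;> norm_num
    · rw [hent0 1]
      refine le_trans (degree_add_le _ _) (max_le ?_ ?_)
      · rw [mul_one]; exact h10.trans hmono2
      · exact degQ11X (e * μ)
    · rw [hent1 1]
      refine le_trans (degree_add_le _ _) (max_le ?_ ?_)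
      · calc (Q 1 0 * C (μ * e')).degree ≤ (Q 1 0).degree + (C (μ * e') : ℤ[X]).degree :=
              degree_mul_le _ _
          _ ≤ ((k + 1 : ℕ) : WithBot ℕ) + 0 := add_le_add h10 degree_C_le
          _ ≤ ((k + 2 : ℕ) : WithBot ℕ) := by rw [add_zero]; exact hmono2
      · rw [mul_add]
        refine le_trans (degree_add_le _ _) (max_le (degQ11X (e * e')) ?_)
        rw [mul_one]; exact h11.trans hmono2

lemma det_Wp (μ : ℤ) (hμ : μ = 1 ∨ μ = -1) (s : ℕ → ℤ) (n : ℕ) :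
    (Wp μ s n).det = 1 := by
  have hμ2 : (μ : ℤ) * μ = 1 := by rcases hμ with h | h <;> simp [h]
  unfold Wp
  rw [← Matrix.coe_detMonoidHom, map_list_prod]
  apply List.prod_eq_one
  intro x hx
  simp only [List.mem_map, List.mem_range] at hx
  obtain ⟨p, hp, rfl⟩ := hx
  obtain ⟨j, hj, rfl⟩ := hp
  simp only [Matrix.coe_detMonoidHom]
  rcases hμ with h | h <;> subst h <;> split <;>
    simp [Yp, Xp, Matrix.det_fin_two_of]

lemma map_Yp (μ : ℤ) (e : ℤ) (μ₀ t : ℂ) (hμc : μ₀ = (μ : ℂ)) :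
    (Yp μ e).map (aeval t : ℤ[X] →ₐ[ℤ] ℂ) = !![μ₀, 0; (e : ℂ) * t, μ₀] := by
  ext i j
  fin_cases i <;> fin_cases j <;> simp [Yp, hμc]

lemma map_Xp (μ : ℤ) (e : ℤ) (μ₀ t : ℂ) (hμc : μ₀ = (μ : ℂ)) :
    (Xp μ e).map (aeval t : ℤ[X] →ₐ[ℤ] ℂ) = !![μ₀, (e : ℂ); 0, μ₀] := by
  ext i j
  fin_cases i <;> fin_cases j <;> simp [Xp, hμc]

lemma Ymat_zpow (μ₀ t : ℂ) (e : ℤ) (hμ : μ₀ * μ₀ = 1) (he : e = 1 ∨ e = -1) :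
    Ymat μ₀ t ^ e = !![μ₀, 0; (e : ℂ) * t, μ₀] := by
  rcases he with rfl | rfl
  · simp [Ymat]
  · rw [Matrix.zpow_neg_one]
    refine Matrix.inv_eq_right_inv ?_
    ext i j
    fin_cases i <;> fin_cases j <;>
      simp [Ymat, Matrix.mul_apply, Fin.sum_univ_two, Matrix.one_apply, hμ] <;> ring

lemma Xmat_zpow (μ₀ : ℂ) (e : ℤ) (hμ : μ₀ * μ₀ = 1) (he : e = 1 ∨ e = -1) :
    Xmat μ₀ ^ e = !![μ₀, (e : ℂ); 0, μ₀] := by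
  rcases he with rfl | rfl
  · simp [Xmat]
  · rw [Matrix.zpow_neg_one]
    refine Matrix.inv_eq_right_inv ?_
    ext i j
    fin_cases i <;> fin_cases j <;>
      simp [Xmat, Matrix.mul_apply, Fin.sum_univ_two, Matrix.one_apply, hμ] <;> ring

lemma Wmat_eq (α β : ℤ) (μ : ℤ) (μ₀ t : ℂ) (hμc : μ₀ = (μ : ℂ)) (hμ : μ = 1 ∨ μ = -1) :
    Wmat α β μ₀ t = (Wp μ (eps α β) (α.toNat - 1)).map (aeval t : ℤ[X] →ₐ[ℤ] ℂ) := by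
  have hμ2 : μ₀ * μ₀ = 1 := by rcases hμ with h | h <;> simp [hμc, h]
  have hmm : (Wp μ (eps α β) (α.toNat - 1)).map (aeval t : ℤ[X] →ₐ[ℤ] ℂ)
      = (((List.range (α.toNat - 1)).map
        (fun j => if (j + 1) % 2 = 1 then Yp μ (eps α β (j + 1)) else Xp μ (eps α β (j + 1)))).map
          (fun M => M.map (aeval t : ℤ[X] →ₐ[ℤ] ℂ))).prod := by
    unfold Wp
    rw [← AlgHom.mapMatrix_apply, map_list_prod]
    rfl
  rw [hmm]
  unfold Wmat
  rw [List.map_map]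
  refine congrArg _ (List.map_congr_left ?_)
  intro j hj
  simp only [Function.comp_apply]
  by_cases h : (j + 1) % 2 = 1
  · rw [if_pos h, if_pos h, map_Yp μ _ μ₀ t hμc,
      Ymat_zpow μ₀ t _ hμ2 (eps_mem α β (j + 1))]
  · rw [if_neg h, if_neg h, map_Xp μ _ μ₀ t hμc,
      Xmat_zpow μ₀ _ hμ2 (eps_mem α β (j + 1))]

end TAux

/-- If `μ₀ ∈ {1,−1}`, `t ∈ ℂ`, and `XW = WY`, then `t` is an algebraic integer. -/
theorem t_isIntegral (α β : ℤ) (hα1 : 1 < α) (hαodd : Odd α) (hβodd : Odd β)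
    (hβl : -α < β) (hβu : β < α) (hcop : IsCoprime α β)
    (μ₀ t : ℂ) (hμ : μ₀ = 1 ∨ μ₀ = -1)
    (hrel : Xmat μ₀ * Wmat α β μ₀ t = Wmat α β μ₀ t * Ymat μ₀ t) :
    IsIntegral ℤ t := by
  classical
  obtain ⟨μ, hμZ, hμc⟩ : ∃ μ : ℤ, (μ = 1 ∨ μ = -1) ∧ μ₀ = (μ : ℂ) := by
    rcases hμ with h | h
    · exact ⟨1, Or.inl rfl, by simp [h]⟩
    · exact ⟨-1, Or.inr rfl, by simp [h]⟩
  obtain ⟨c, hc⟩ := hαodd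
  have hk : ∃ k : ℕ, α.toNat - 1 = 2 * (k + 1) := ⟨c.toNat - 1, by omega⟩
  obtain ⟨k, hkeq⟩ := hk
  set Wm := Wmat α β μ₀ t with hWm
  -- entry equations from XW = WY
  have h01 : (Xmat μ₀ * Wm) 0 1 = (Wm * Ymat μ₀ t) 0 1 := by rw [hrel]
  have h00 : (Xmat μ₀ * Wm) 0 0 = (Wm * Ymat μ₀ t) 0 0 := by rw [hrel]
  simp [Xmat, Ymat, Matrix.mul_apply, Fin.sum_univ_two] at h01 h00
  have hd : Wm 1 1 = 0 := by linear_combination h01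
  have hcb : Wm 1 0 = Wm 0 1 * t := by linear_combination h00
  -- polynomial description of W
  have hmap := TAux.Wmat_eq α β μ μ₀ t hμc hμZ
  rw [hkeq] at hmap
  set p := TAux.Wp μ (eps α β) (2 * (k + 1)) 0 1 with hp
  have hb : Wm 0 1 = Polynomial.aeval t p := by
    rw [hWm, hmap]; rfl
  -- determinant
  have hdet : Wm.det = 1 := by
    rw [hWm, hmap, ← AlgHom.mapMatrix_apply, ← AlgHom.map_det, TAux.det_Wp μ hμZ, _root_.map_one]
  rw [Matrix.det_fin_two, hd, hcb] at hdet
  have htb : t * (Polynomial.aeval t p) ^ 2 = -1 := by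
    rw [← hb]; linear_combination -hdet
  -- degree facts about p
  obtain ⟨-, hdeg, hcoef, -, -⟩ := TAux.Wp_deg μ hμZ (eps α β) (TAux.eps_mem α β) k
  have hpc : p.coeff k = 1 ∨ p.coeff k = -1 := hcoef
  have hpne : p ≠ 0 := by
    intro h
    rcases hpc with hh | hh <;> rw [h] at hh <;> simp at hh
  have hnd : p.natDegree = k := by
    refine le_antisymm (Polynomial.natDegree_le_iff_degree_le.2 hdeg) ?_
    refine Polynomial.le_natDegree_of_ne_zero ?_
    rcases hpc with hh | hh <;> rw [hh] <;> norm_num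
  have hlc : p.leadingCoeff = 1 ∨ p.leadingCoeff = -1 := by
    rw [Polynomial.leadingCoeff, hnd]; exact hpc
  -- the monic polynomial
  set q : ℤ[X] := Polynomial.X * p ^ 2 + 1 with hq
  have hmon2 : (p ^ 2).Monic := by
    rw [Polynomial.Monic, Polynomial.leadingCoeff_pow]
    rcases hlc with hh | hh <;> rw [hh] <;> norm_num
  have hmonXp : (Polynomial.X * p ^ 2).Monic := Polynomial.monic_X.mul hmon2
  have hdegpos : (0 : WithBot ℕ) < (Polynomial.X * p ^ 2).degree := by
    have h1 : (Polynomial.X : ℤ[X]).degree ≤ (Polynomial.X * p ^ 2).degree := by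
      refine Polynomial.degree_le_mul_left _ (pow_ne_zero _ hpne)
    calc (0 : WithBot ℕ) < (Polynomial.X : ℤ[X]).degree := by
          rw [Polynomial.degree_X]; exact zero_lt_one
      _ ≤ _ := h1
  have hqmon : q.Monic := by
    refine hmonXp.add_of_left ?_
    calc (1 : ℤ[X]).degree ≤ 0 := Polynomial.degree_one_le
      _ < _ := hdegpos
  refine ⟨q, hqmon, ?_⟩
  rw [← Polynomial.aeval_def, hq]
  simp only [map_add, _root_.map_mul, map_pow, _root_.map_one, Polynomial.aeval_X]
  linear_combination htb
end
end

section
/- Let ℓ, m ≥ 2 be integers, α = ℓm+1, β = m. A finite sequence [n_1, …, n_k] of integers with |n_i| ≥ 2 for all i satisfies cf[n_1, …, n_k] = β/α if and only if it equals A = [ℓ, m] or it equals the length-m sequence B with B_1 = ℓ+1 and B_i = (−1)^{i−1}·2 for 2 ≤ i ≤ m. -/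
/-- The continued fraction value `cf [n_1, …, n_k] = 1/(n_1 + 1/(n_2 + ⋯ + 1/n_k))`. -/
def cf : List ℤ → ℚ
  | [] => 0
  | n :: L => 1 / ((n : ℚ) + cf L)

/-!
If every `|nᵢ| ≥ 2` then `|cf L| < 1`, so `cf (n :: L) = x` pins down `n` as an integer within
distance `1` of `x⁻¹`: when `a < x⁻¹ ≤ a + 1` only `n = a` and `n = a + 1` survive, and the tail has
value `x⁻¹ - n`. For `x = m / (ℓ m + 1)` we have `x⁻¹ = ℓ + 1/m`. The head `ℓ` leaves the tail value
`1/m`, which only `[m]` attains. The head `ℓ + 1` leaves `-(m - 1)/m`, up to sign `k/(k + 1)` for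
`k = m - 1`. In general the reciprocal `1 + 1/k` of `k/(k + 1)` forces the head `2` (the head `1`
is excluded) and leaves `-(k - 1)/k`, so induction on `k` produces the alternating tail
`2, -2, 2, …`.
-/

theorem cf_cons (n : ℤ) (L : List ℤ) : cf (n :: L) = ((n : ℚ) + cf L)⁻¹ :=
  one_div _

theorem cf_cons_eq_iff {n : ℤ} {L : List ℤ} {x : ℚ} : cf (n :: L) = x ↔ cf L = x⁻¹ - n := by
  rw [cf_cons, inv_eq_iff_eq_inv, eq_sub_iff_add_eq']

theorem cf_map_neg (L : List ℤ) : cf (L.map Neg.neg) = -cf L := by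
  induction L with
  | nil => simp [cf]
  | cons n L ih => rw [List.map_cons, cf_cons, cf_cons, ih, Int.cast_neg, ← neg_add, inv_neg]

theorem one_lt_abs_add_cf {n : ℤ} {L : List ℤ} (hn : 2 ≤ |n|) (hL : |cf L| < 1) :
    1 < |(n : ℚ) + cf L| := by
  have hn' : (2 : ℚ) ≤ |(n : ℚ)| := by exact_mod_cast hn
  have := abs_sub_abs_le_abs_sub (n : ℚ) (-cf L)
  rw [abs_neg, sub_neg_eq_add] at this
  linarith

theorem abs_cf_lt_one {L : List ℤ} (hL : ∀ n ∈ L, 2 ≤ |n|) : |cf L| < 1 := by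
  induction L with
  | nil => simp [cf]
  | cons n L ih =>
    obtain ⟨hn, hL⟩ := List.forall_mem_cons.1 hL
    rw [cf_cons, abs_inv]
    exact inv_lt_one_of_one_lt₀ (one_lt_abs_add_cf hn (ih hL))

theorem cf_eq_zero_iff {L : List ℤ} (hL : ∀ n ∈ L, 2 ≤ |n|) : cf L = 0 ↔ L = [] := by
  refine ⟨fun h => ?_, fun h => h ▸ rfl⟩
  cases L with
  | nil => rfl
  | cons n L =>
    obtain ⟨hn, hL⟩ := List.forall_mem_cons.1 hL
    rw [cf_cons, inv_eq_zero] at h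
    have := one_lt_abs_add_cf hn (abs_cf_lt_one hL)
    rw [h, abs_zero] at this
    exact absurd this (by norm_num)

theorem abs_inv_cf_cons_sub_lt_one {n : ℤ} {L : List ℤ} (hL : ∀ x ∈ n :: L, 2 ≤ |x|) :
    |(cf (n :: L))⁻¹ - n| < 1 := by
  rw [cf_cons, inv_inv, add_sub_cancel_left]
  exact abs_cf_lt_one (List.forall_mem_cons.1 hL).2

theorem head_eq_or_eq_add_one {a n : ℤ} {L : List ℤ} {t : ℚ} (hL : ∀ y ∈ n :: L, 2 ≤ |y|)
    (hcf : cf (n :: L) = ((a : ℚ) + t)⁻¹) (ht₀ : 0 < t) (ht₁ : t ≤ 1) : n = a ∨ n = a + 1 := by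
  have h := abs_inv_cf_cons_sub_lt_one hL
  rw [hcf, inv_inv, abs_sub_lt_iff] at h
  have h₁ : ((a - 1 : ℤ) : ℚ) < n := by push_cast; linarith
  have h₂ : (n : ℚ) < (a + 2 : ℤ) := by push_cast; linarith
  have := Int.cast_lt.1 h₁
  have := Int.cast_lt.1 h₂
  omega

theorem cf_eq_inv_intCast_iff {m : ℤ} (hm : m ≠ 0) {L : List ℤ} (hL : ∀ n ∈ L, 2 ≤ |n|) :
    cf L = (m : ℚ)⁻¹ ↔ L = [m] := by
  refine ⟨fun h => ?_, ?_⟩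
  · obtain ⟨n, L, rfl⟩ :=
      List.exists_cons_of_ne_nil ((cf_eq_zero_iff hL).not.1 (by rw [h]; simpa))
    have habs := abs_inv_cf_cons_sub_lt_one hL
    rw [h, inv_inv] at habs
    obtain rfl : n = m := by
      have : m - n = 0 := Int.abs_lt_one_iff.1 (by exact_mod_cast habs)
      omega
    rw [cf_cons_eq_iff, inv_inv, sub_self, cf_eq_zero_iff (List.forall_mem_cons.1 hL).2] at h
    rw [h]
  · rintro rfl
    simp [cf]

theorem forall_two_le_abs_map_neg {L : List ℤ} (hL : ∀ n ∈ L, 2 ≤ |n|) :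
    ∀ n ∈ L.map Neg.neg, 2 ≤ |n| :=
  List.forall_mem_map.2 fun n hn => (abs_neg n).symm ▸ hL n hn

def altTwos (k : ℕ) : List ℤ :=
  List.ofFn fun j : Fin k => (-1) ^ (j : ℕ) * 2

theorem altTwos_succ (k : ℕ) : altTwos (k + 1) = 2 :: (altTwos k).map Neg.neg := by
  simp [altTwos, List.ofFn_succ, List.map_ofFn, Function.comp_def, pow_succ]

theorem cf_altTwos (k : ℕ) : cf (altTwos k) = k / (k + 1) := by
  induction k with
  | zero => simp [altTwos, cf]
  | succ k ih =>
    have hk : (2 : ℚ) + -(k / (k + 1)) = (k + 2) / (k + 1) := by field_simp; ring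
    rw [altTwos_succ, cf_cons, cf_map_neg, ih, Int.cast_ofNat, hk, inv_div]
    push_cast
    ring

theorem cf_eq_iff_eq_altTwos (k : ℕ) {L : List ℤ} (hL : ∀ n ∈ L, 2 ≤ |n|) :
    cf L = k / (k + 1) ↔ L = altTwos k := by
  refine ⟨fun h => ?_, fun h => h ▸ cf_altTwos k⟩
  induction k generalizing L with
  | zero => simpa [altTwos, cf_eq_zero_iff hL] using h
  | succ k ih =>
    obtain ⟨n, L, rfl⟩ := List.exists_cons_of_ne_nil 
      ((cf_eq_zero_iff hL).not.1 (by rw [h]; positivity))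
    obtain ⟨hn, hL'⟩ := List.forall_mem_cons.1 hL
    have hx : cf (n :: L) = (1 + ((k : ℚ) + 1)⁻¹)⁻¹ := by
      rw [h]; push_cast; field_simp
    obtain rfl : n = 2 := by
      rcases head_eq_or_eq_add_one (a := 1) hL (by exact_mod_cast hx) (by positivity)
        (inv_le_one_of_one_le₀ (by simp)) with rfl | rfl
      · norm_num at hn
      · rfl
    rw [cf_cons_eq_iff, inv_inv] at hx
    have hneg : cf (L.map Neg.neg) = k / (k + 1) := by
      rw [cf_map_neg, hx]; push_cast; field_simp; ring
    rw [altTwos_succ, ← ih (forall_two_le_abs_map_neg hL') hneg, neg_involutive.list_map L]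

theorem ofFn_eq_cons_map_neg_altTwos (a : ℤ) (k : ℕ) :
    List.ofFn (fun j : Fin (k + 1) => if (j : ℕ) = 0 then a else (-1) ^ (j : ℕ) * 2) =
      a :: (altTwos k).map Neg.neg := by
  simp [altTwos, List.ofFn_succ, List.map_ofFn, Function.comp_def, pow_succ]

theorem cf_eq_iff_A_or_B_general (ℓ m : ℕ) (hm : 2 ≤ m)
    (L : List ℤ) (hL : ∀ n ∈ L, 2 ≤ |n|) :
    cf L = (m : ℚ) / ((ℓ : ℚ) * m + 1) ↔
      L = [(ℓ : ℤ), (m : ℤ)] ∨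
      L = List.ofFn (fun j : Fin m =>
            if (j : ℕ) = 0 then (ℓ : ℤ) + 1 else (-1) ^ (j : ℕ) * 2) := by
  obtain ⟨k, rfl⟩ : ∃ k, m = k + 1 := ⟨m - 1, by omega⟩
  have hx : ((k + 1 : ℕ) : ℚ) / (ℓ * (k + 1 : ℕ) + 1) = ((ℓ : ℚ) + ((k + 1 : ℕ) : ℚ)⁻¹)⁻¹ := by
    field_simp
  have htail : ((k + 1 : ℕ) : ℚ)⁻¹ - 1 = -(k / (k + 1)) := by
    push_cast; field_simp; ring
  rw [ofFn_eq_cons_map_neg_altTwos, hx]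
  constructor
  · intro h
    obtain ⟨n, L, rfl⟩ := List.exists_cons_of_ne_nil 
      ((cf_eq_zero_iff hL).not.1 (by rw [h]; positivity))
    have hL' := (List.forall_mem_cons.1 hL).2
    rcases head_eq_or_eq_add_one (a := ℓ) hL (by exact_mod_cast h) (by positivity)
      (inv_le_one_of_one_le₀ (by simp)) with rfl | rfl
    · left
      rw [cf_cons_eq_iff, inv_inv, Int.cast_natCast, add_sub_cancel_left, ← Int.cast_natCast,
        cf_eq_inv_intCast_iff (by omega) hL'] at h
      rw [h]
    · right
      rw [cf_cons_eq_iff, inv_inv, Int.cast_add, Int.cast_one, Int.cast_natCast,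
        add_sub_add_left_eq_sub, htail, ← neg_eq_iff_eq_neg, ← cf_map_neg,
        cf_eq_iff_eq_altTwos k (forall_two_le_abs_map_neg hL'),
        neg_involutive.list_map.eq_iff] at h
      rw [h]
  · rintro (rfl | rfl)
    · rw [cf_cons_eq_iff, inv_inv]
      simp [cf]
    · rw [cf_cons_eq_iff, inv_inv, cf_map_neg, cf_altTwos, ← htail]
      push_cast
      ring

/-- For `ℓ, m ≥ 2`, `α = ℓm+1`, `β = m`: a sequence of integers all of absolute value
at least `2` has continued fraction value `β/α` iff it is `A = [ℓ, m]` or the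
length-`m` sequence `B` with `B_1 = ℓ+1` and `B_i = (−1)^{i−1}·2` for `2 ≤ i ≤ m`. -/
theorem cf_eq_iff_A_or_B (ℓ m : ℕ) (hℓ : 2 ≤ ℓ) (hm : 2 ≤ m)
    (L : List ℤ) (hL : ∀ n ∈ L, 2 ≤ |n|) :
    cf L = (m : ℚ) / ((ℓ : ℚ) * m + 1) ↔
      L = [(ℓ : ℤ), (m : ℤ)] ∨
      L = List.ofFn (fun j : Fin m =>
            if (j : ℕ) = 0 then (ℓ : ℤ) + 1 else (-1) ^ (j : ℕ) * 2) :=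
  cf_eq_iff_A_or_B_general ℓ m hm L hL
end

section
/- Let α, β be coprime integers with α odd, α > 1, β even, and 0 < |β| < α. Then there exists exactly one finite sequence [n_1, …, n_k] of nonzero even integers with cf[n_1, …, n_k] = β/α (the Seifert expansion of β/α). -/
theorem Int.two_le_abs_of_even {n : ℤ} (hn : Even n) (h0 : n ≠ 0) : 2 ≤ |n| := by
  obtain ⟨k, rfl⟩ := hn
  rcases abs_cases (k + k) with ⟨h, _⟩ | ⟨h, _⟩ <;> omega

theorem Int.eq_of_even_of_abs_sub_lt_two {m n : ℤ} (hm : Even m) (hn : Even n)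
    (h : |m - n| < 2) : m = n := by
  obtain ⟨k, hk⟩ := hm.sub hn
  rw [abs_lt] at h
  omega

theorem Int.exists_even_abs_sub_mul_lt {a b : ℤ} (ha : a ≠ 0) (hab : Odd (a + b)) :
    ∃ n, Even n ∧ |b - n * a| < |a| := by
  have h2a : 2 * a ≠ 0 := by omega
  have hs0 := Int.emod_nonneg (b + |a|) h2a
  have hs2 := Int.emod_lt_abs (b + |a|) h2a
  have hsum := Int.mul_ediv_add_emod (b + |a|) (2 * a)
  -- `b + |a| = 2aq + s` with `0 ≤ s < 2|a|`; `s` is odd, so `b - 2qa = s - |a|` lies strictly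
  -- between `-|a|` and `|a|`.
  refine ⟨2 * ((b + |a|) / (2 * a)), even_two_mul _, ?_⟩
  rw [abs_mul, abs_two] at hs2
  rw [mul_assoc] at hsum
  rw [mul_right_comm, mul_assoc, abs_lt]
  obtain ⟨k, hk⟩ := hab
  rcases abs_cases a with ⟨h, _⟩ | ⟨h, _⟩ <;> omega

section LinearOrderedField

variable {K : Type*} [Field K] [LinearOrder K] [IsStrictOrderedRing K]

theorem one_lt_abs_intCast_add {n : ℤ} {x : K} (hn : 2 ≤ |n|) (hx : |x| < 1) :
    1 < |(n : K) + x| := by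
  have hn' : (2 : K) ≤ |(n : K)| := by exact_mod_cast hn
  have := abs_sub_abs_le_abs_add (n : K) x
  linarith

theorem Int.eq_of_even_of_intCast_add_eq {m n : ℤ} {x y : K} (hm : Even m) (hn : Even n)
    (hx : |x| < 1) (hy : |y| < 1) (h : (m : K) + x = n + y) : m = n := by
  refine Int.eq_of_even_of_abs_sub_lt_two hm hn ?_
  have hmn : ((m - n : ℤ) : K) = y - x := by push_cast; linarith
  have : |((m - n : ℤ) : K)| < 2 := by
    rw [hmn]
    linarith [abs_sub y x]
  exact_mod_cast this

end LinearOrderedField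

theorem abs_cf_lt_one_s11 : ∀ {L : List ℤ}, (∀ n ∈ L, 2 ≤ |n|) → |cf L| < 1
  | [], _ => by simp [cf]
  | n :: L, h => by
    rw [List.forall_mem_cons] at h
    have hden := one_lt_abs_intCast_add h.1 (abs_cf_lt_one_s11 h.2)
    rw [cf, abs_div, abs_one, div_lt_one (by linarith)]
    exact hden

theorem cf_cons_ne_zero {n : ℤ} {L : List ℤ} (h : ∀ m ∈ n :: L, 2 ≤ |m|) :
    cf (n :: L) ≠ 0 := by
  rw [List.forall_mem_cons] at h
  have hden := one_lt_abs_intCast_add h.1 (abs_cf_lt_one_s11 h.2)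
  rw [cf]
  exact one_div_ne_zero (abs_pos.mp (by linarith))

theorem two_le_abs_of_forall_even {L : List ℤ} (h : ∀ n ∈ L, n ≠ 0 ∧ Even n) :
    ∀ n ∈ L, 2 ≤ |n| :=
  fun n hn => Int.two_le_abs_of_even (h n hn).2 (h n hn).1

theorem cf_injOn : Set.InjOn cf {L | ∀ n ∈ L, n ≠ 0 ∧ Even n} := by
  intro L hL L' hL' heq
  induction L generalizing L' with
  | nil =>
    cases L' with
    | nil => rfl
    | cons n' M' => exact absurd heq.symm (cf_cons_ne_zero (two_le_abs_of_forall_even hL'))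
  | cons n M ih =>
    cases L' with
    | nil => exact absurd heq (cf_cons_ne_zero (two_le_abs_of_forall_even hL))
    | cons n' M' =>
      simp only [Set.mem_ofPred_eq, List.forall_mem_cons] at hL hL'
      have hsum : (n : ℚ) + cf M = n' + cf M' := by
        simpa only [cf, one_div, inv_inj] using heq
      obtain rfl := Int.eq_of_even_of_intCast_add_eq hL.1.2 hL'.1.2
        (abs_cf_lt_one_s11 (two_le_abs_of_forall_even hL.2))
        (abs_cf_lt_one_s11 (two_le_abs_of_forall_even hL'.2)) hsum
      rw [ih hL.2 hL'.2 (add_left_cancel hsum)]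

theorem exists_cf_eq_div {a b : ℤ} (hab : |a| < |b|) (hpar : Odd (a + b)) :
    ∃ L : List ℤ, (∀ n ∈ L, n ≠ 0 ∧ Even n) ∧ cf L = a / b := by
  rcases eq_or_ne a 0 with rfl | ha
  · exact ⟨[], by simp, by simp [cf]⟩
  obtain ⟨n, hn, hr⟩ := Int.exists_even_abs_sub_mul_lt ha hpar
  have hn0 : n ≠ 0 := by
    rintro rfl
    simp only [zero_mul, sub_zero] at hr
    exact hr.not_gt hab
  have hpar' : Odd (b - n * a + a) := by
    rw [show b - n * a + a = a + b - n * a by ring]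
    exact hpar.sub_even (hn.mul_right a)
  obtain ⟨L, hL, hcf⟩ := exists_cf_eq_div hr hpar'
  refine ⟨n :: L, List.forall_mem_cons.mpr ⟨⟨hn0, hn⟩, hL⟩, ?_⟩
  have ha' : (a : ℚ) ≠ 0 := by exact_mod_cast ha
  have hden : (n : ℚ) + ((b - n * a : ℤ) : ℚ) / a = b / a := by
    push_cast
    field_simp
    ring
  rw [cf, hcf, hden, one_div_div]
termination_by b.natAbs
decreasing_by
  rw [Int.abs_eq_natAbs, Int.abs_eq_natAbs] at hab
  exact_mod_cast hab

theorem seifert_expansion_unique_general (α β : ℤ) (hαodd : Odd α)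
    (hβeven : Even β) (hβα : |β| < α) :
    ∃! L : List ℤ, (∀ n ∈ L, n ≠ 0 ∧ Even n) ∧ cf L = (β : ℚ) / (α : ℚ) := by
  obtain ⟨L, hL, hcf⟩ := exists_cf_eq_div (hβα.trans_le (le_abs_self α)) (hβeven.add_odd hαodd)
  exact ⟨L, ⟨hL, hcf⟩, fun L' hL' => cf_injOn hL'.1 hL (hL'.2.trans hcf.symm)⟩

/-- For `α` odd, `α > 1`, `β` even, `0 < |β| < α`, and `gcd(α,β) = 1`, there is exactly
one finite sequence of nonzero even integers whose continued fraction value is `β/α`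
(the Seifert expansion). -/
theorem seifert_expansion_unique (α β : ℤ) (hα1 : 1 < α) (hαodd : Odd α)
    (hβeven : Even β) (hβ0 : 0 < |β|) (hβα : |β| < α) (hcop : IsCoprime α β) :
    ∃! L : List ℤ, (∀ n ∈ L, n ≠ 0 ∧ Even n) ∧ cf L = (β : ℚ) / (α : ℚ) :=
  seifert_expansion_unique_general α β hαodd hβeven hβα
end

section
/- Let ℓ, m ≥ 2 be integers, at least one of which is even. Then s(A) = 0, s(B) = m, and s(C) = −ℓ. Exactly one of A, B, C has all entries even, namely A if ℓ and m are both even, B if ℓ is odd, and C if m is odd; call it n₀ and set N_n = 2(s(n) − s(n₀)). Then (N_A, N_B, N_C) = (0, 2m, −2ℓ) if ℓ and m are both even, (−2m, 0, −2(ℓ+m)) if ℓ is odd, and (2ℓ, 2(ℓ+m), 0) if m is odd. -/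
/-- `n⁺`: the number of (0-based) indices `j` with `sign(n_j) = (−1)^j`
(1-based: `sign(n_i) = (−1)^{i−1}`). -/
def nplus (L : List ℤ) : ℕ :=
  ((Finset.range L.length).filter (fun j => (L.getD j 0).sign = (-1) ^ j)).card

/-- `s(n) = n⁺ − n⁻` where `n⁻ = k − n⁺`. -/
def sval (L : List ℤ) : ℤ := 2 * (nplus L : ℤ) - L.length

/-- The expansion `A = [ℓ, m]` of `J(ℓ,−m)`. -/
def seqA (ℓ m : ℕ) : List ℤ := [(ℓ : ℤ), (m : ℤ)]

/-- The expansion `B = [ℓ+1, −2, 2, …, (−1)^{m−1}·2]` of length `m`. -/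
def seqB (ℓ m : ℕ) : List ℤ :=
  List.ofFn (fun j : Fin m => if (j : ℕ) = 0 then (ℓ : ℤ) + 1 else (-1) ^ (j : ℕ) * 2)

/-- The expansion `C = [−2, 2, …, (−1)^{ℓ−1}·2, (−1)^ℓ·(m+1)]` of length `ℓ`. -/
def seqC (ℓ m : ℕ) : List ℤ :=
  List.ofFn (fun j : Fin ℓ =>
    if (j : ℕ) = ℓ - 1 then (-1) ^ ℓ * ((m : ℤ) + 1) else (-1) ^ ((j : ℕ) + 1) * 2)

/-- All entries of a sequence are even. -/
def allEven (L : List ℤ) : Prop := ∀ n ∈ L, Even n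

lemma sign_pow_mul {k : ℕ} {c : ℤ} (hc : 0 < c) : (((-1:ℤ)^k * c)).sign = (-1)^k := by
  rcases Nat.even_or_odd k with h | h
  · simp [h.neg_one_pow, Int.sign_eq_one_of_pos hc]
  · simp [h.neg_one_pow, Int.sign_eq_one_of_pos hc]

lemma neg_one_pow_succ_ne (k : ℕ) : ((-1:ℤ))^(k+1) ≠ (-1)^k := by
  rcases Nat.even_or_odd k with h | h
  · simp [pow_succ, h.neg_one_pow]
  · simp [pow_succ, h.neg_one_pow]

lemma svalA (ℓ m : ℕ) (hℓ : 2 ≤ ℓ) (hm : 2 ≤ m) : sval (seqA ℓ m) = 0 := by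
  have h : nplus (seqA ℓ m) = 1 := by
    unfold nplus
    have hlen : (seqA ℓ m).length = 2 := rfl
    rw [hlen]
    have : (Finset.range 2).filter (fun j => ((seqA ℓ m).getD j 0).sign = (-1) ^ j) = {0} := by
      ext j
      simp only [Finset.mem_filter, Finset.mem_range, Finset.mem_singleton]
      constructor
      · rintro ⟨hj, hs⟩
        interval_cases j
        · rfl
        · exfalso
          have : ((m:ℤ)).sign = 1 := Int.sign_eq_one_of_pos (by exact_mod_cast (by omega : 0 < m))
          simp [seqA, this] at hs
      · rintro rfl
        refine ⟨by norm_num, ?_⟩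
        have : ((ℓ:ℤ)).sign = 1 := Int.sign_eq_one_of_pos (by exact_mod_cast (by omega : 0 < ℓ))
        simp [seqA, this]
    rw [this]; rfl
  unfold sval; rw [h]; simp [seqA]

lemma lenB (ℓ m : ℕ) : (seqB ℓ m).length = m := by simp [seqB]

lemma svalB (ℓ m : ℕ) (hm : 1 ≤ m) : sval (seqB ℓ m) = (m : ℤ) := by
  have h : nplus (seqB ℓ m) = m := by
    unfold nplus
    rw [lenB, Finset.filter_true_of_mem, Finset.card_range]
    intro j hj
    rw [Finset.mem_range] at hj
    rw [List.getD_eq_getElem _ _ (by rw [lenB]; exact hj)]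
    simp only [seqB, List.getElem_ofFn]
    by_cases h0 : j = 0
    · subst h0
      simp [Int.sign_eq_one_of_pos (by positivity : (0:ℤ) < (ℓ:ℤ) + 1)]
    · simp only [h0, if_false]
      exact sign_pow_mul (by norm_num)
  unfold sval; rw [h, lenB]; ring

lemma lenC (ℓ m : ℕ) : (seqC ℓ m).length = ℓ := by simp [seqC]

lemma svalC (ℓ m : ℕ) (hℓ : 1 ≤ ℓ) : sval (seqC ℓ m) = -(ℓ : ℤ) := by
  have h : nplus (seqC ℓ m) = 0 := by
    unfold nplus
    rw [lenC, Finset.card_eq_zero]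
    rw [Finset.filter_eq_empty_iff]
    intro j hj
    rw [Finset.mem_range] at hj
    rw [List.getD_eq_getElem _ _ (by rw [lenC]; exact hj)]
    simp only [seqC, List.getElem_ofFn]
    by_cases h0 : j = ℓ - 1
    · simp only [h0, if_true]
      rw [sign_pow_mul (by positivity : (0:ℤ) < (m:ℤ) + 1)]
      have h1 : ℓ = (ℓ - 1) + 1 := by omega
      rw [h1]
      exact neg_one_pow_succ_ne (ℓ - 1)
    · simp only [h0, if_false]
      rw [sign_pow_mul (by norm_num : (0:ℤ) < 2)]
      exact neg_one_pow_succ_ne j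
  unfold sval; rw [h, lenC]; ring

lemma allEvenB (ℓ m : ℕ) (hm : 1 ≤ m) : allEven (seqB ℓ m) ↔ Odd ℓ := by
  constructor
  · intro h
    have hmem : ((ℓ:ℤ) + 1) ∈ seqB ℓ m := by
      rw [seqB, List.mem_ofFn]
      exact ⟨⟨0, hm⟩, by simp⟩
    have := h _ hmem
    have : Odd (ℓ : ℤ) := by simpa [Int.even_add_one] using this
    exact_mod_cast this
  · intro hodd n hn
    rw [seqB, List.mem_ofFn] at hn
    obtain ⟨i, hi⟩ := hn
    by_cases h0 : (i : ℕ) = 0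
    · simp only [h0, if_true] at hi
      rw [← hi]
      have : Odd (ℓ : ℤ) := by exact_mod_cast hodd
      simpa [Int.even_add_one, Int.not_even_iff_odd] using this
    · simp only [h0, if_false] at hi
      rw [← hi]
      exact even_two.mul_left _

lemma allEvenC (ℓ m : ℕ) (hℓ : 1 ≤ ℓ) : allEven (seqC ℓ m) ↔ Odd m := by
  constructor
  · intro h
    have hmem : ((-1:ℤ)^ℓ * ((m:ℤ) + 1)) ∈ seqC ℓ m := by
      rw [seqC, List.mem_ofFn]
      exact ⟨⟨ℓ - 1, by omega⟩, by simp⟩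
    have h2 := h _ hmem
    have h3 : Even ((m:ℤ) + 1) := by
      rcases Int.even_mul.mp h2 with h4 | h4
      · exact absurd h4 (by simp [Int.even_pow, Int.not_even_iff_odd])
      · exact h4
    have : Odd (m : ℤ) := by simpa [Int.even_add_one] using h3
    exact_mod_cast this
  · intro hodd n hn
    rw [seqC, List.mem_ofFn] at hn
    obtain ⟨i, hi⟩ := hn
    by_cases h0 : (i : ℕ) = ℓ - 1
    · simp only [h0, if_true] at hi
      rw [← hi]
      have : Odd (m : ℤ) := by exact_mod_cast hodd
      have h3 : Even ((m:ℤ) + 1) := by simpa [Int.even_add_one, Int.not_even_iff_odd] using this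
      exact h3.mul_left _
    · simp only [h0, if_false] at hi
      rw [← hi]
      exact even_two.mul_left _


/-- For `J(ℓ,−m)` with `ℓ, m ≥ 2` and at least one of `ℓ, m` even:
`s(A) = 0`, `s(B) = m`, `s(C) = −ℓ`; exactly one of `A, B, C` is the even (Seifert)
expansion `n₀` according to the parities, and with `N_n = 2(s(n) − s(n₀))` the boundary
slopes `(N_A, N_B, N_C)` take the stated values. -/
theorem slopes_J_ell_neg_m (ℓ m : ℕ) (hℓ : 2 ≤ ℓ) (hm : 2 ≤ m)
    (hpar : Even ℓ ∨ Even m) :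
    sval (seqA ℓ m) = 0 ∧ sval (seqB ℓ m) = (m : ℤ) ∧ sval (seqC ℓ m) = -(ℓ : ℤ) ∧
    ((Even ℓ ∧ Even m) →
      allEven (seqA ℓ m) ∧ ¬allEven (seqB ℓ m) ∧ ¬allEven (seqC ℓ m) ∧
      2 * (sval (seqA ℓ m) - sval (seqA ℓ m)) = 0 ∧
      2 * (sval (seqB ℓ m) - sval (seqA ℓ m)) = 2 * (m : ℤ) ∧
      2 * (sval (seqC ℓ m) - sval (seqA ℓ m)) = -2 * (ℓ : ℤ)) ∧
    (Odd ℓ →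
      ¬allEven (seqA ℓ m) ∧ allEven (seqB ℓ m) ∧ ¬allEven (seqC ℓ m) ∧
      2 * (sval (seqA ℓ m) - sval (seqB ℓ m)) = -2 * (m : ℤ) ∧
      2 * (sval (seqB ℓ m) - sval (seqB ℓ m)) = 0 ∧
      2 * (sval (seqC ℓ m) - sval (seqB ℓ m)) = -2 * ((ℓ : ℤ) + (m : ℤ))) ∧
    (Odd m →
      ¬allEven (seqA ℓ m) ∧ ¬allEven (seqB ℓ m) ∧ allEven (seqC ℓ m) ∧
      2 * (sval (seqA ℓ m) - sval (seqC ℓ m)) = 2 * (ℓ : ℤ) ∧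
      2 * (sval (seqB ℓ m) - sval (seqC ℓ m)) = 2 * ((ℓ : ℤ) + (m : ℤ)) ∧
      2 * (sval (seqC ℓ m) - sval (seqC ℓ m)) = 0) := by
  have hA := svalA ℓ m hℓ hm
  have hB := svalB ℓ m (by omega)
  have hC := svalC ℓ m (by omega)
  have eA : allEven (seqA ℓ m) ↔ (Even ℓ ∧ Even m) := by
    simp [allEven, seqA, Int.even_coe_nat]
  have eB := allEvenB ℓ m (by omega)
  have eC := allEvenC ℓ m (by omega)
  refine ⟨hA, hB, hC, ?_, ?_, ?_⟩
  · rintro ⟨h1, h2⟩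
    refine ⟨eA.mpr ⟨h1, h2⟩, ?_, ?_, by ring, ?_, ?_⟩
    · rw [eB]; exact Nat.not_odd_iff_even.mpr h1
    · rw [eC]; exact Nat.not_odd_iff_even.mpr h2
    · rw [hA, hB]; ring
    · rw [hA, hC]; ring
  · intro h1
    have h2 : Even m := by
      rcases hpar with h | h
      · exact absurd h (Nat.not_even_iff_odd.mpr h1)
      · exact h
    refine ⟨?_, eB.mpr h1, ?_, ?_, by ring, ?_⟩
    · rw [eA]; rintro ⟨h3, -⟩; exact (Nat.not_even_iff_odd.mpr h1) h3
    · rw [eC]; exact Nat.not_odd_iff_even.mpr h2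
    · rw [hA, hB]; ring
    · rw [hB, hC]; ring
  · intro h1
    have h2 : Even ℓ := by
      rcases hpar with h | h
      · exact h
      · exact absurd h (Nat.not_even_iff_odd.mpr h1)
    refine ⟨?_, ?_, eC.mpr h1, ?_, ?_, by ring⟩
    · rw [eA]; rintro ⟨-, h3⟩; exact (Nat.not_even_iff_odd.mpr h1) h3
    · rw [eB]; exact Nat.not_odd_iff_even.mpr h2
    · rw [hA, hC]; ring
    · rw [hB, hC]; ring
end
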